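/- arXiv:2508.06774 — 9 statements merged into one kernel-verified Lean document; each statement's English description precedes it below -/
import Mathlib

section
/- Let X = {x₁,…,xₙ} and Y = {y₁,…,yₙ} be points in ℝ^d, let ε > 0, t > 0, and let C ∈ ℝ^{n×n} have positive entries with ‖xᵢ − yⱼ‖₁ ≤ (1+ε)·C_{ij} for all i, j. Let λ be a probability distribution on [n]×[n]×{−1,1} with probabilities λ_{i,j,σ}. Define b ∈ ℝ^{2n} by bᵢ = t·Σ_{j∈[n]} Σ_{σ∈{−1,1}} λ_{i,j,σ}·σ/C_{ij} for i ∈ [n] and b_{n+j} = −t·Σ_{i∈[n]} Σ_{σ∈{−1,1}} λ_{i,j,σ}·σ/C_{ij} for j ∈ [n]. Then Σ_{k=1}^{2n} b_k = 0 and EMD_P(b) ≤ (1+ε)·t, where P is the list of 2n points x₁,…,xₙ,y₁,…,yₙ with ℓ₁ costs. -/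
open Finset

/-- ℓ₁ distance on functions `ι → ℝ`. -/
noncomputable def l1dist {ι : Type} [Fintype ι] (u v : ι → ℝ) : ℝ := ∑ k, |u k - v k|

/-- Min-cost-flow Earth Mover's Distance of a vector `b` (with `∑ b = 0`) with respect to
the cost matrix `cost`. -/
noncomputable def EMDgen {ι : Type} [Fintype ι] (cost : ι → ι → ℝ) (b : ι → ℝ) : ℝ :=
  sInf { c : ℝ | ∃ γ : ι → ι → ℝ, (∀ i j, 0 ≤ γ i j) ∧
    (∀ i, ∑ j, γ i j = max (b i) 0) ∧ (∀ j, ∑ i, γ i j = max (-(b j)) 0) ∧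
    c = ∑ i, ∑ j, γ i j * cost i j }

/-- The sign `σ ∈ {−1, 1}`, encoded by a boolean. -/
def sg (σ : Bool) : ℝ := if σ then 1 else -1

/-!
The flow sending `t λ(i,j,+) / C(i,j)` from `xᵢ` to `yⱼ` and `t λ(i,j,−) / C(i,j)` from `yⱼ` to
`xᵢ` has net outflow `b` and cost at most `(1+ε) t`. It is not yet a feasible flow, since a point
may both send and receive. Because the cost satisfies the triangle inequality, the flow through a
node `k` can be short-circuited: `min (out k) (in k)` units are rerouted from the predecessors to
the successors of `k`, in proportion to the flow on the edges at `k`, without changing net flows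
or raising the cost. Clearing the nodes one at a time yields a feasible flow.
-/

section Flows

variable {ι : Type*} [Fintype ι]

noncomputable def outflow (γ : ι → ι → ℝ) (a : ι) : ℝ := ∑ b, γ a b

noncomputable def inflow (γ : ι → ι → ℝ) (b : ι) : ℝ := ∑ a, γ a b

noncomputable def flowCost (d γ : ι → ι → ℝ) : ℝ := ∑ a, ∑ b, γ a b * d a b

theorem outflow_nonneg {γ : ι → ι → ℝ} (hγ : ∀ a b, 0 ≤ γ a b) (a : ι) : 0 ≤ outflow γ a :=
  sum_nonneg fun b _ => hγ a b

theorem inflow_nonneg {γ : ι → ι → ℝ} (hγ : ∀ a b, 0 ≤ γ a b) (b : ι) : 0 ≤ inflow γ b :=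
  sum_nonneg fun a _ => hγ a b

theorem sum_outflow_sub_inflow (γ : ι → ι → ℝ) : ∑ a, (outflow γ a - inflow γ a) = 0 := by
  simp only [outflow, inflow, sum_sub_distrib]
  rw [sum_comm, sub_self]

variable [DecidableEq ι]

/-- Replaces `m` units of flow entering `k` with profile `u` and leaving `k` with profile `v`
by the direct flow `m • u ⊗ v`. -/
noncomputable def shortcut (γ : ι → ι → ℝ) (k : ι) (m : ℝ) (u v : ι → ℝ) : ι → ι → ℝ :=
  fun a b => γ a b + m * (u a * v b - (if b = k then u a else 0) - (if a = k then v b else 0))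

variable {γ : ι → ι → ℝ} {k : ι} {m : ℝ} {u v : ι → ℝ}

theorem outflow_shortcut (hv : ∑ b, v b = 1) (a : ι) :
    outflow (shortcut γ k m u v) a = outflow γ a - if a = k then m else 0 := by
  simp only [outflow, shortcut, sum_add_distrib, ← mul_sum, sum_sub_distrib, sum_ite_eq',
    sum_ite_irrel, sum_const_zero, mem_univ, if_true, hv]
  split_ifs <;> ring

theorem inflow_shortcut (hu : ∑ a, u a = 1) (b : ι) :
    inflow (shortcut γ k m u v) b = inflow γ b - if b = k then m else 0 := by
  simp only [inflow, shortcut, sum_add_distrib, ← mul_sum, sum_sub_distrib, ← sum_mul,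
    sum_ite_eq', sum_ite_irrel, sum_const_zero, mem_univ, if_true, hu]
  split_ifs <;> ring

theorem flowCost_shortcut_le {d : ι → ι → ℝ} (htri : ∀ a c b, d a b ≤ d a c + d c b)
    (hu : ∀ a, 0 ≤ u a) (hv : ∀ b, 0 ≤ v b) (hu1 : ∑ a, u a = 1) (hv1 : ∑ b, v b = 1)
    (hm : 0 ≤ m) : flowCost d (shortcut γ k m u v) ≤ flowCost d γ := by
  have hexpand : flowCost d (shortcut γ k m u v) = flowCost d γ +
      m * (∑ a, ∑ b, u a * v b * d a b - ∑ a, u a * d a k - ∑ b, v b * d k b) := by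
    have hterm : ∀ a b, shortcut γ k m u v a b * d a b = γ a b * d a b + m * (u a * v b * d a b -
        (if b = k then u a * d a k else 0) - (if a = k then v b * d k b else 0)) := by
      intro a b
      simp only [shortcut]
      split_ifs with hb ha <;> subst_vars <;> ring
    simp only [flowCost, hterm, sum_add_distrib, ← mul_sum, sum_sub_distrib, sum_ite_eq',
      sum_ite_irrel, sum_const_zero, mem_univ, if_true]
  have hdirect : ∑ a, ∑ b, u a * v b * d a b ≤ ∑ a, u a * d a k + ∑ b, v b * d k b :=
    calc ∑ a, ∑ b, u a * v b * d a b ≤ ∑ a, ∑ b, u a * v b * (d a k + d k b) := by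
          gcongr with a _ b _
          · exact mul_nonneg (hu a) (hv b)
          · exact htri a k b
      _ = (∑ a, u a * d a k) * ∑ b, v b + (∑ a, u a) * ∑ b, v b * d k b := by
          simp only [sum_mul_sum, ← sum_add_distrib]
          exact sum_congr rfl fun a _ => sum_congr rfl fun b _ => by ring
      _ = ∑ a, u a * d a k + ∑ b, v b * d k b := by rw [hu1, hv1, mul_one, one_mul]
  rw [hexpand]
  linarith [mul_le_mul_of_nonneg_left hdirect hm]

variable {d : ι → ι → ℝ}

theorem exists_loop_removed (htri : ∀ a c b, d a b ≤ d a c + d c b) (hγ : ∀ a b, 0 ≤ γ a b)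
    (k : ι) : ∃ γ' : ι → ι → ℝ, (∀ a b, 0 ≤ γ' a b) ∧ γ' k k = 0 ∧
      (∀ a, outflow γ' a = outflow γ a - if a = k then γ k k else 0) ∧
      (∀ a, inflow γ' a = inflow γ a - if a = k then γ k k else 0) ∧
      flowCost d γ' ≤ flowCost d γ := by
  -- with `u = v = single k 1`, a shortcut through `k` just deletes flow on the loop at `k`
  set e : ι → ℝ := Pi.single k 1
  have he1 : ∑ a, e a = 1 := by simp [e]
  have he : ∀ a, 0 ≤ e a := fun a => by by_cases ha : a = k <;> simp [e, ha]
  refine ⟨shortcut γ k (γ k k) e e, fun a b => ?_, ?_, outflow_shortcut he1, inflow_shortcut he1,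
    flowCost_shortcut_le htri he he he1 he1 (hγ k k)⟩
  · by_cases ha : a = k <;> by_cases hb : b = k <;> subst_vars <;> simp [shortcut, e, *]
  · simp [shortcut, e]

theorem exists_transit_cleared_at_of_loop_eq_zero (htri : ∀ a c b, d a b ≤ d a c + d c b)
    (hγ : ∀ a b, 0 ≤ γ a b) (hkk : γ k k = 0) :
    ∃ γ' : ι → ι → ℝ, (∀ a b, 0 ≤ γ' a b) ∧
      (∀ a, outflow γ' a = outflow γ a - if a = k then min (outflow γ k) (inflow γ k) else 0) ∧
      (∀ a, inflow γ' a = inflow γ a - if a = k then min (outflow γ k) (inflow γ k) else 0) ∧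
      flowCost d γ' ≤ flowCost d γ := by
  rcases (le_min (outflow_nonneg hγ k) (inflow_nonneg hγ k)).eq_or_lt with hm | hm
  · exact ⟨γ, hγ, by simp [← hm], by simp [← hm], le_rfl⟩
  set O := outflow γ k
  set I := inflow γ k
  have hO : 0 < O := hm.trans_le (min_le_left _ _)
  have hI : 0 < I := hm.trans_le (min_le_right _ _)
  have hu1 : ∑ a, γ a k / I = 1 := by rw [← sum_div]; exact div_self hI.ne'
  have hv1 : ∑ b, γ k b / O = 1 := by rw [← sum_div]; exact div_self hO.ne'
  refine ⟨shortcut γ k (min O I) (fun a => γ a k / I) (fun b => γ k b / O), fun a b => ?_,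
    outflow_shortcut hv1, inflow_shortcut hu1,
    flowCost_shortcut_le htri (fun a => by have := hγ a k; positivity)
      (fun b => by have := hγ k b; positivity) hu1 hv1 hm.le⟩
  have hout : ∀ b, min O I * (γ k b / O) ≤ γ k b := fun b =>
    calc min O I * (γ k b / O) ≤ O * (γ k b / O) :=
          mul_le_mul_of_nonneg_right (min_le_left _ _) (div_nonneg (hγ k b) hO.le)
      _ = γ k b := mul_div_cancel₀ _ hO.ne'
  have hin : ∀ a, min O I * (γ a k / I) ≤ γ a k := fun a =>
    calc min O I * (γ a k / I) ≤ I * (γ a k / I) :=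
          mul_le_mul_of_nonneg_right (min_le_right _ _) (div_nonneg (hγ a k) hI.le)
      _ = γ a k := mul_div_cancel₀ _ hI.ne'
  by_cases ha : a = k <;> by_cases hb : b = k <;>
    simp only [shortcut, ha, hb, hkk, if_true, if_false, zero_div, zero_mul, mul_zero, sub_zero,
      zero_sub, sub_self, add_zero, mul_neg, le_refl]
  · linarith [hout b]
  · linarith [hin a]
  · have := hγ a b; have := hγ a k; have := hγ k b
    positivity

theorem exists_transit_cleared_at (htri : ∀ a c b, d a b ≤ d a c + d c b)
    (hγ : ∀ a b, 0 ≤ γ a b) (k : ι) :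
    ∃ (γ' : ι → ι → ℝ) (c : ℝ), (∀ a b, 0 ≤ γ' a b) ∧
      (∀ a, outflow γ' a = outflow γ a - if a = k then c else 0) ∧
      (∀ a, inflow γ' a = inflow γ a - if a = k then c else 0) ∧
      min (outflow γ' k) (inflow γ' k) = 0 ∧ flowCost d γ' ≤ flowCost d γ := by
  obtain ⟨γ₁, hγ₁, hkk, hout₁, hin₁, hcost₁⟩ := exists_loop_removed htri hγ k
  obtain ⟨γ₂, hγ₂, hout₂, hin₂, hcost₂⟩ := exists_transit_cleared_at_of_loop_eq_zero htri hγ₁ hkk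
  refine ⟨γ₂, γ k k + min (outflow γ₁ k) (inflow γ₁ k), hγ₂, fun a => ?_, fun a => ?_, ?_,
    hcost₂.trans hcost₁⟩
  · rw [hout₂, hout₁]; split_ifs <;> ring
  · rw [hin₂, hin₁]; split_ifs <;> ring
  · simp only [hout₂, hin₂, if_true, min_sub_sub_right, sub_self]

theorem exists_transit_free (htri : ∀ a c b, d a b ≤ d a c + d c b) (hγ : ∀ a b, 0 ≤ γ a b) :
    ∃ γ' : ι → ι → ℝ, (∀ a b, 0 ≤ γ' a b) ∧
      (∀ a, outflow γ' a - inflow γ' a = outflow γ a - inflow γ a) ∧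
      (∀ a, min (outflow γ' a) (inflow γ' a) = 0) ∧ flowCost d γ' ≤ flowCost d γ := by
  suffices ∀ s : Finset ι, ∃ γ' : ι → ι → ℝ, (∀ a b, 0 ≤ γ' a b) ∧
      (∀ a, outflow γ' a - inflow γ' a = outflow γ a - inflow γ a) ∧
      (∀ a ∈ s, min (outflow γ' a) (inflow γ' a) = 0) ∧ flowCost d γ' ≤ flowCost d γ by
    simpa using this univ
  intro s
  induction s using Finset.induction_on with
  | empty => exact ⟨γ, hγ, fun _ => rfl, by simp, le_rfl⟩
  | insert k s hk ih =>
    obtain ⟨γ₁, hγ₁, hnet₁, hmin₁, hcost₁⟩ := ih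
    obtain ⟨γ₂, c, hγ₂, hout₂, hin₂, hmin₂, hcost₂⟩ := exists_transit_cleared_at htri hγ₁ k
    refine ⟨γ₂, hγ₂, fun a => ?_, ?_, hcost₂.trans hcost₁⟩
    · rw [hout₂, hin₂, sub_sub_sub_cancel_right, hnet₁]
    · refine forall_mem_insert _ _ _ |>.2 ⟨hmin₂, fun a ha => ?_⟩
      have hak : a ≠ k := ne_of_mem_of_not_mem ha hk
      simp [hout₂, hin₂, hak, hmin₁ a ha]

end Flows

theorem eq_max_sub_of_min_eq_zero {x y : ℝ} (hx : 0 ≤ x) (hy : 0 ≤ y) (h : min x y = 0) :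
    x = max (x - y) 0 ∧ y = max (-(x - y)) 0 := by
  rcases min_eq_iff.mp h with ⟨rfl, _⟩ | ⟨rfl, _⟩ <;> simp [*]

section EMD

variable {ι : Type} [Fintype ι] {d γ : ι → ι → ℝ} {b : ι → ℝ}

theorem EMDgen_le_flowCost (hd : ∀ i j, 0 ≤ d i j) (hγ : ∀ i j, 0 ≤ γ i j)
    (hout : ∀ i, outflow γ i = max (b i) 0) (hin : ∀ i, inflow γ i = max (-b i) 0) :
    EMDgen d b ≤ flowCost d γ :=
  csInf_le ⟨0, by
    rintro _ ⟨γ', hγ', -, -, rfl⟩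
    exact sum_nonneg fun i _ => sum_nonneg fun j _ => mul_nonneg (hγ' i j) (hd i j)⟩
    ⟨γ, hγ, hout, hin, rfl⟩

theorem EMDgen_le_flowCost_of_netFlow [DecidableEq ι] (hd : ∀ i j, 0 ≤ d i j)
    (htri : ∀ i k j, d i j ≤ d i k + d k j) (hγ : ∀ i j, 0 ≤ γ i j)
    (hb : ∀ i, outflow γ i - inflow γ i = b i) : EMDgen d b ≤ flowCost d γ := by
  obtain ⟨γ', hγ', hnet, hmin, hcost⟩ := exists_transit_free htri hγ
  have hmarg := fun i =>
    eq_max_sub_of_min_eq_zero (outflow_nonneg hγ' i) (inflow_nonneg hγ' i) (hmin i)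
  refine (EMDgen_le_flowCost hd hγ' (fun i => ?_) (fun i => ?_)).trans hcost
  · rw [(hmarg i).1, hnet, hb]
  · conv_lhs => rw [(hmarg i).2, hnet, hb]

end EMD

section L1

variable {ι : Type} [Fintype ι]

theorem l1dist_nonneg (u v : ι → ℝ) : 0 ≤ l1dist u v :=
  sum_nonneg fun _ _ => abs_nonneg _

theorem l1dist_comm (u v : ι → ℝ) : l1dist u v = l1dist v u :=
  sum_congr rfl fun _ _ => abs_sub_comm _ _

theorem l1dist_triangle (u v w : ι → ℝ) : l1dist u w ≤ l1dist u v + l1dist v w := by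
  rw [l1dist, l1dist, l1dist, ← sum_add_distrib]
  exact sum_le_sum fun _ _ => abs_sub_le _ _ _

end L1

section SignedFlow

variable {α β : Type*}

noncomputable def signedFlow (t : ℝ) (C : α → β → ℝ) (lam : α → β → Bool → ℝ) :
    α ⊕ β → α ⊕ β → ℝ
  | .inl i, .inr j => t * lam i j true / C i j
  | .inr j, .inl i => t * lam i j false / C i j
  | _, _ => 0

variable {t : ℝ} {C : α → β → ℝ} {lam : α → β → Bool → ℝ}

theorem signedFlow_nonneg (ht : 0 ≤ t) (hC : ∀ i j, 0 ≤ C i j) (hlam : ∀ i j σ, 0 ≤ lam i j σ) :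
    ∀ p q, 0 ≤ signedFlow t C lam p q := by
  rintro (i | j) (i' | j') <;> simp only [signedFlow, le_refl] <;>
    exact div_nonneg (mul_nonneg ht (hlam _ _ _)) (hC _ _)

variable [Fintype α] [Fintype β]

theorem netFlow_signedFlow_inl (i : α) :
    outflow (signedFlow t C lam) (.inl i) - inflow (signedFlow t C lam) (.inl i) =
      t * ∑ j, ∑ σ, lam i j σ * sg σ / C i j := by
  simp only [outflow, inflow, Fintype.sum_sum_type, signedFlow, sum_const_zero, zero_add, mul_sum,
    ← sum_sub_distrib, Fintype.sum_bool, sg, if_true, Bool.false_eq_true, if_false]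
  exact sum_congr rfl fun j _ => by ring

theorem netFlow_signedFlow_inr (j : β) :
    outflow (signedFlow t C lam) (.inr j) - inflow (signedFlow t C lam) (.inr j) =
      -(t * ∑ i, ∑ σ, lam i j σ * sg σ / C i j) := by
  simp only [outflow, inflow, Fintype.sum_sum_type, signedFlow, sum_const_zero, add_zero, mul_sum,
    ← sum_sub_distrib, Fintype.sum_bool, sg, if_true, Bool.false_eq_true, if_false]
  rw [← sum_neg_distrib]
  exact sum_congr rfl fun i _ => by ring

theorem flowCost_signedFlow_le {d : α ⊕ β → α ⊕ β → ℝ} {K : ℝ} (ht : 0 ≤ t)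
    (hC : ∀ i j, 0 < C i j) (hlam : ∀ i j σ, 0 ≤ lam i j σ)
    (hdC : ∀ i j, d (.inl i) (.inr j) ≤ K * C i j) (hdC' : ∀ i j, d (.inr j) (.inl i) ≤ K * C i j) :
    flowCost d (signedFlow t C lam) ≤ K * t * ∑ i, ∑ j, ∑ σ, lam i j σ := by
  have hterm : ∀ i j σ e, e ≤ K * C i j → t * lam i j σ / C i j * e ≤ K * (t * lam i j σ) :=
    fun i j σ e he => calc
      t * lam i j σ / C i j * e ≤ t * lam i j σ / C i j * (K * C i j) := by
        gcongr
        exact div_nonneg (mul_nonneg ht (hlam i j σ)) (hC i j).le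
      _ = K * (t * lam i j σ) := by field_simp [(hC i j).ne']
  calc flowCost d (signedFlow t C lam)
      = ∑ i, ∑ j, t * lam i j true / C i j * d (.inl i) (.inr j) +
          ∑ j, ∑ i, t * lam i j false / C i j * d (.inr j) (.inl i) := by
        simp [flowCost, signedFlow, Fintype.sum_sum_type]
    _ ≤ ∑ i, ∑ j, K * (t * lam i j true) + ∑ j, ∑ i, K * (t * lam i j false) := by
        exact add_le_add (sum_le_sum fun i _ => sum_le_sum fun j _ => hterm i j true _ (hdC i j))
          (sum_le_sum fun j _ => sum_le_sum fun i _ => hterm i j false _ (hdC' i j))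
    _ = K * t * ∑ i, ∑ j, ∑ σ, lam i j σ := by
        rw [sum_comm (f := fun j i => K * (t * lam i j false)), ← sum_add_distrib]
        simp only [← sum_add_distrib, mul_sum, Fintype.sum_bool]
        exact sum_congr rfl fun i _ => sum_congr rfl fun j _ => by ring

end SignedFlow

theorem certify_flow_bound_general {n D : ℕ} (x y : Fin n → Fin D → ℝ) (ε t : ℝ)
    (ht : 0 < t)
    (C : Fin n → Fin n → ℝ) (hCpos : ∀ i j, 0 < C i j)
    (hC : ∀ i j, l1dist (x i) (y j) ≤ (1 + ε) * C i j)
    (lam : Fin n → Fin n → Bool → ℝ) (hlam : ∀ i j σ, 0 ≤ lam i j σ)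
    (hsum : ∑ i, ∑ j, ∑ σ, lam i j σ = 1)
    (b : Fin n ⊕ Fin n → ℝ)
    (hb1 : ∀ i, b (Sum.inl i) = t * ∑ j, ∑ σ, lam i j σ * sg σ / C i j)
    (hb2 : ∀ j, b (Sum.inr j) = -(t * ∑ i, ∑ σ, lam i j σ * sg σ / C i j)) :
    (∑ k, b k = 0) ∧
    EMDgen (fun p q => l1dist (Sum.elim x y p) (Sum.elim x y q)) b ≤ (1 + ε) * t := by
  set d := fun p q => l1dist (Sum.elim x y p) (Sum.elim x y q)
  have hnet : ∀ p, outflow (signedFlow t C lam) p - inflow (signedFlow t C lam) p = b p := by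
    rintro (i | j)
    · rw [netFlow_signedFlow_inl, hb1]
    · rw [netFlow_signedFlow_inr, hb2]
  refine ⟨by simpa only [hnet] using sum_outflow_sub_inflow (signedFlow t C lam), ?_⟩
  calc EMDgen d b ≤ flowCost d (signedFlow t C lam) :=
        EMDgen_le_flowCost_of_netFlow (fun _ _ => l1dist_nonneg _ _)
          (fun _ _ _ => l1dist_triangle _ _ _)
          (signedFlow_nonneg ht.le (fun i j => (hCpos i j).le) hlam) hnet
    _ ≤ (1 + ε) * t * ∑ i, ∑ j, ∑ σ, lam i j σ :=
        flowCost_signedFlow_le ht.le hCpos hlam hC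
          (fun i j => (l1dist_comm _ _).trans_le (hC i j))
    _ = (1 + ε) * t := by rw [hsum, mul_one]

/-- the supply/demand vector `b` induced by a distribution `λ` on
`[n]×[n]×{−1,1}` sums to zero and has `EMD_P(b) ≤ (1+ε)·t`, where `P` is the list of the
`2n` points `x₁,…,xₙ,y₁,…,yₙ` with ℓ₁ costs. -/
theorem certify_flow_bound {n D : ℕ} (x y : Fin n → Fin D → ℝ) (ε t : ℝ)
    (hε : 0 < ε) (ht : 0 < t)
    (C : Fin n → Fin n → ℝ) (hCpos : ∀ i j, 0 < C i j)
    (hC : ∀ i j, l1dist (x i) (y j) ≤ (1 + ε) * C i j)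
    (lam : Fin n → Fin n → Bool → ℝ) (hlam : ∀ i j σ, 0 ≤ lam i j σ)
    (hsum : ∑ i, ∑ j, ∑ σ, lam i j σ = 1)
    (b : Fin n ⊕ Fin n → ℝ)
    (hb1 : ∀ i, b (Sum.inl i) = t * ∑ j, ∑ σ, lam i j σ * sg σ / C i j)
    (hb2 : ∀ j, b (Sum.inr j) = -(t * ∑ i, ∑ σ, lam i j σ * sg σ / C i j)) :
    (∑ k, b k = 0) ∧
    EMDgen (fun p q => l1dist (Sum.elim x y p) (Sum.elim x y q)) b ≤ (1 + ε) * t :=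
  certify_flow_bound_general x y ε t ht C hCpos hC lam hlam hsum b hb1 hb2
end

section
/- Let n ≥ 1, χ ∈ (0,1), η > 0, K > 0, let r ≥ 0 be an integer, and let C ∈ ℝ^{n×n} have positive entries. Let (α,β), (α̃,β̃) ∈ ℤⁿ×ℤⁿ and set (α',β') = (α+α̃, β+β̃). Let D, P be rounded-dual matrices for (α,β) and D', P' for (α',β'), with corresponding weights w and w'. Suppose D_{ij} ≤ (r+1)·K·C_{ij} and D'_{ij} ≤ (r+1)·K·C_{ij} for all i, j. Then for every i, j ∈ [n] and σ ∈ {−1,1}: w'_{i,j,σ} ≤ w_{i,j,σ}·exp(2·η·χ·(r+1)·K)·exp(η·σ·(α̃ᵢ − β̃ⱼ)/C_{ij}). -/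
open Finset

/-- `(D, P)` is a rounded-dual pair for `(α, β)` with rounding parameter `χ`:
`D` has entries in `{0} ∪ {(1+χ)^h : h ∈ ℕ}` with `D_{ij} ≤ |αᵢ − βⱼ| ≤ (1+χ)·D_{ij}`,
and `P` is the sign matrix of `α_i − β_j` (with `sign 0 = 1`). -/
def IsRoundedDual {n : ℕ} (χ : ℝ) (α β : Fin n → ℤ)
    (D P : Fin n → Fin n → ℝ) : Prop :=
  (∀ i j, D i j = 0 ∨ ∃ h : ℕ, D i j = (1 + χ) ^ h) ∧
  (∀ i j, D i j ≤ |(α i : ℝ) - (β j : ℝ)| ∧ |(α i : ℝ) - (β j : ℝ)| ≤ (1 + χ) * D i j) ∧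
  (∀ i j, P i j = if 0 ≤ α i - β j then (1 : ℝ) else -1)

/-- The MWU weight `w_{i,j,σ} = exp(η·σ·P_{ij}·D_{ij}/C_{ij})`. -/
noncomputable def wt {n : ℕ} (η : ℝ) (C D P : Fin n → Fin n → ℝ)
    (i j : Fin n) (σ : ℝ) : ℝ :=
  Real.exp (η * (σ * P i j) * D i j / C i j)

/-! `P·D` approximates `α − β` within `χ·D`, so a step `(α̃, β̃)` of the duals moves
`σ·P·D` by `σ·(α̃ᵢ − β̃ⱼ)` up to the two rounding errors `χ·D` and `χ·D'`, each at most
`χ·(r+1)·K·C`. Dividing by `C`, scaling by `η` and exponentiating gives the weight bound. -/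

lemma abs_ite_mul_sub_le {χ a d : ℝ} (hlb : d ≤ |a|) (hub : |a| ≤ (1 + χ) * d) :
    |(if 0 ≤ a then (1 : ℝ) else -1) * d - a| ≤ χ * d := by
  rw [abs_le]
  split_ifs with ha
  · rw [abs_of_nonneg ha] at hlb hub
    constructor <;> linarith
  · rw [abs_of_neg (not_le.mp ha)] at hlb hub
    constructor <;> linarith

namespace IsRoundedDual

variable {n : ℕ} {χ : ℝ} {α β : Fin n → ℤ} {D P : Fin n → Fin n → ℝ}

lemma abs_mul_sub_le (h : IsRoundedDual χ α β D P) (i j : Fin n) :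
    |P i j * D i j - ((α i : ℝ) - β j)| ≤ χ * D i j := by
  obtain ⟨-, hsandwich, hsign⟩ := h
  have hsign' : P i j = if 0 ≤ (α i : ℝ) - β j then (1 : ℝ) else -1 := by
    rw [hsign i j]
    congr 1
    norm_cast
  rw [hsign']
  exact abs_ite_mul_sub_le (hsandwich i j).1 (hsandwich i j).2

lemma mul_update_le {D' P' : Fin n → Fin n → ℝ} {αt βt : Fin n → ℤ}
    (h : IsRoundedDual χ α β D P) (h' : IsRoundedDual χ (α + αt) (β + βt) D' P')
    (i j : Fin n) {σ : ℝ} (hσ : |σ| ≤ 1) :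
    σ * P' i j * D' i j ≤
      σ * P i j * D i j + σ * ((αt i : ℝ) - βt j) + χ * (D' i j + D i j) := by
  have herr := h.abs_mul_sub_le i j
  have herr' := h'.abs_mul_sub_le i j
  simp only [Pi.add_apply, Int.cast_add] at herr'
  set e := P i j * D i j - ((α i : ℝ) - β j)
  set e' := P' i j * D' i j - (((α i : ℝ) + αt i) - (β j + βt j))
  have hupdate : σ * P' i j * D' i j - σ * P i j * D i j - σ * ((αt i : ℝ) - βt j)
      = σ * (e' - e) := by ring
  have hσe : σ * (e' - e) ≤ χ * (D' i j + D i j) :=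
    calc σ * (e' - e) ≤ |σ| * |e' - e| := (le_abs_self _).trans (abs_mul _ _).le
      _ ≤ 1 * (|e'| + |e|) := mul_le_mul hσ (abs_sub _ _) (abs_nonneg _) zero_le_one
      _ ≤ χ * (D' i j + D i j) := by linarith
  linarith

end IsRoundedDual

lemma wt_le_wt_mul_exp_mul_exp {n : ℕ} {η c : ℝ} (hη : 0 ≤ η) {C D P D' P' : Fin n → Fin n → ℝ}
    {i j : Fin n} (hC : 0 < C i j) {σ δ : ℝ}
    (h : σ * P' i j * D' i j ≤ σ * P i j * D i j + σ * δ + c * C i j) :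
    wt η C D' P' i j σ ≤ wt η C D P i j σ * Real.exp (η * c) * Real.exp (η * σ * δ / C i j) := by
  rw [wt, wt, ← Real.exp_add, ← Real.exp_add, Real.exp_le_exp]
  have hscaled := mul_le_mul_of_nonneg_left h hη
  calc η * (σ * P' i j) * D' i j / C i j
      = η * (σ * P' i j * D' i j) / C i j := by ring
    _ ≤ η * (σ * P i j * D i j + σ * δ + c * C i j) / C i j := by gcongr
    _ = η * (σ * P i j) * D i j / C i j + η * c + η * σ * δ / C i j := by
        field_simp
        ring

theorem weight_update_bound_general {n : ℕ} (χ η K : ℝ)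
    (hχ : χ ∈ Set.Ioo (0 : ℝ) 1) (hη : 0 < η) (r : ℕ)
    (C : Fin n → Fin n → ℝ) (hC : ∀ i j, 0 < C i j)
    (α β αt βt : Fin n → ℤ)
    (D P D' P' : Fin n → Fin n → ℝ)
    (hDP : IsRoundedDual χ α β D P)
    (hDP' : IsRoundedDual χ (α + αt) (β + βt) D' P')
    (hDbound : ∀ i j, D i j ≤ ((r : ℝ) + 1) * K * C i j)
    (hD'bound : ∀ i j, D' i j ≤ ((r : ℝ) + 1) * K * C i j) :
    ∀ i j, ∀ σ : ℝ, (σ = 1 ∨ σ = -1) →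
      wt η C D' P' i j σ ≤
        wt η C D P i j σ * Real.exp (2 * η * χ * ((r : ℝ) + 1) * K) *
          Real.exp (η * σ * ((αt i : ℝ) - (βt j : ℝ)) / C i j) := by
  intro i j σ hσ
  have hσ_abs : |σ| ≤ 1 := by rcases hσ with rfl | rfl <;> norm_num
  have hupdate := hDP.mul_update_le hDP' i j hσ_abs
  have herr : χ * (D' i j + D i j) ≤ 2 * χ * ((r : ℝ) + 1) * K * C i j := by
    nlinarith [hχ.1, hDbound i j, hD'bound i j]
  rw [show 2 * η * χ * ((r : ℝ) + 1) * K = η * (2 * χ * ((r : ℝ) + 1) * K) by ring]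
  exact wt_le_wt_mul_exp_mul_exp hη.le (hC i j) (by linarith)

/-- evolution of the rounded-dual weights under one MWU update. -/
theorem weight_update_bound {n : ℕ} (hn : 1 ≤ n) (χ η K : ℝ)
    (hχ : χ ∈ Set.Ioo (0 : ℝ) 1) (hη : 0 < η) (hK : 0 < K) (r : ℕ)
    (C : Fin n → Fin n → ℝ) (hC : ∀ i j, 0 < C i j)
    (α β αt βt : Fin n → ℤ)
    (D P D' P' : Fin n → Fin n → ℝ)
    (hDP : IsRoundedDual χ α β D P)
    (hDP' : IsRoundedDual χ (α + αt) (β + βt) D' P')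
    (hDbound : ∀ i j, D i j ≤ ((r : ℝ) + 1) * K * C i j)
    (hD'bound : ∀ i j, D' i j ≤ ((r : ℝ) + 1) * K * C i j) :
    ∀ i j, ∀ σ : ℝ, (σ = 1 ∨ σ = -1) →
      wt η C D' P' i j σ ≤
        wt η C D P i j σ * Real.exp (2 * η * χ * ((r : ℝ) + 1) * K) *
          Real.exp (η * σ * ((αt i : ℝ) - (βt j : ℝ)) / C i j) :=
  weight_update_bound_general χ η K hχ hη r C hC α β αt βt D P D' P' hDP hDP' hDbound hD'bound
end

section
/- There is an absolute constant C₀ > 0 such that the following holds. Let n ≥ 1, χ ∈ (0,1), K ≥ 1, 0 < η ≤ 1/(100·K), γ > 0, t > 0, let r ≥ 0 be an integer, and let C ∈ ℝ^{n×n} have positive entries. Let (α,β), (α̃,β̃) ∈ ℤⁿ×ℤⁿ with (α',β') = (α+α̃, β+β̃); let D, P and D', P' be rounded duals of (α,β) and (α',β'), with weights w and w', and suppose D_{ij} ≤ (r+1)·K·C_{ij} and D'_{ij} ≤ (r+1)·K·C_{ij} for all i, j. Let λ be the probability distribution on [n]×[n]×{−1,1} proportional to w, and set ṽ = (1/t)·(Σᵢ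 α̃ᵢ − Σⱼ β̃ⱼ). Suppose: Σ_{i,j,σ} λ_{i,j,σ}·σ·(α̃ᵢ − β̃ⱼ)/C_{ij} ≤ ṽ − γ; |α̃ᵢ − β̃ⱼ| ≤ K·C_{ij} for all i,j; and |ṽ| ≤ K. Then, with W = Σ_{i,j,σ} w_{i,j,σ} and W' = Σ_{i,j,σ} w'_{i,j,σ}: W' ≤ W·exp(η·(2·χ·(r+1)·K + ṽ − γ + C₀·η·K²)). -/
/-! Since `P D` approximates `α - β` within `χ D ≤ χ (r+1) K C` for both rounded duals, each
weight `w'_{ijσ}` is at most `w_{ijσ} · exp (η σ (α̃ᵢ - β̃ⱼ) / Cᵢⱼ + 2ηχ(r+1)K)`. The exponent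
`y = η σ (α̃ᵢ - β̃ⱼ) / Cᵢⱼ` satisfies `|y| ≤ ηK ≤ 1`, so `exp y ≤ 1 + y + (ηK)²`; summing, the
linear terms add up to `η W` times the `λ`-mean of `σ (α̃ᵢ - β̃ⱼ) / Cᵢⱼ`, which is at most
`ṽ - γ`, and `1 + z ≤ exp z` closes the estimate with `C₀ = 1`. -/

open Finset

/-- Total weight `W = ∑_{i,j,σ∈{−1,1}} w_{i,j,σ}`. -/
noncomputable def totW {n : ℕ} (η : ℝ) (C D P : Fin n → Fin n → ℝ) : ℝ :=
  ∑ i, ∑ j, (wt η C D P i j 1 + wt η C D P i j (-1))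

/-- The probability distribution `λ` proportional to the weights `w`. -/
noncomputable def lamOf {n : ℕ} (η : ℝ) (C D P : Fin n → Fin n → ℝ)
    (i j : Fin n) (σ : ℝ) : ℝ :=
  wt η C D P i j σ / totW η C D P

noncomputable def signedPairs (n : ℕ) : Finset (Fin n × Fin n × ℝ) := univ ×ˢ univ ×ˢ {1, -1}

lemma sum_sum_add_neg_eq_sum_signedPairs {n : ℕ} (f : Fin n → Fin n → ℝ → ℝ) :
    ∑ i, ∑ j, (f i j 1 + f i j (-1)) = ∑ p ∈ signedPairs n, f p.1 p.2.1 p.2.2 := by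
  rw [signedPairs, sum_product, sum_congr rfl fun i _ => sum_product _ _ _]
  norm_num [sum_pair]

lemma abs_eq_one_of_mem_signedPairs {n : ℕ} {p : Fin n × Fin n × ℝ} (hp : p ∈ signedPairs n) :
    |p.2.2| = 1 := by
  simp only [signedPairs, mem_product, mem_univ, mem_insert, mem_singleton, true_and] at hp
  rcases hp with h | h <;> simp [h]

lemma Real.exp_le_one_add_add_sq {y : ℝ} (hy : |y| ≤ 1) : Real.exp y ≤ 1 + y + y ^ 2 := by
  linarith [(abs_le.mp (Real.abs_exp_sub_one_sub_id_le hy)).2]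

lemma sum_le_sum_mul_exp_of_le_mul_exp {ι : Type*} (s : Finset ι) {w w' y : ι → ℝ}
    {T m δ : ℝ} (hw : ∀ p ∈ s, 0 ≤ w p) (hδ : δ ≤ 1) (hy : ∀ p ∈ s, |y p| ≤ δ)
    (hw' : ∀ p ∈ s, w' p ≤ w p * Real.exp (y p + T))
    (hmean : ∑ p ∈ s, w p * y p ≤ (∑ p ∈ s, w p) * m) :
    ∑ p ∈ s, w' p ≤ (∑ p ∈ s, w p) * Real.exp (T + m + δ ^ 2) := by
  have hpoint : ∀ p ∈ s, w' p ≤ Real.exp T * (w p * (1 + δ ^ 2) + w p * y p) := by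
    intro p hp
    have hsq : y p ^ 2 ≤ δ ^ 2 := sq_le_sq' (abs_le.mp (hy p hp)).1 (abs_le.mp (hy p hp)).2
    have hexp := Real.exp_le_one_add_add_sq ((hy p hp).trans hδ)
    calc w' p ≤ w p * (Real.exp (y p) * Real.exp T) := by rw [← Real.exp_add]; exact hw' p hp
      _ ≤ w p * ((1 + y p + δ ^ 2) * Real.exp T) := by
          have := hw p hp
          gcongr
          linarith
      _ = Real.exp T * (w p * (1 + δ ^ 2) + w p * y p) := by ring
  have hW : 0 ≤ ∑ p ∈ s, w p := sum_nonneg hw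
  calc ∑ p ∈ s, w' p ≤ Real.exp T * ((∑ p ∈ s, w p) * (1 + δ ^ 2) + ∑ p ∈ s, w p * y p) := by
        rw [sum_mul, ← sum_add_distrib, mul_sum]; exact sum_le_sum hpoint
    _ ≤ Real.exp T * ((∑ p ∈ s, w p) * (1 + (m + δ ^ 2))) := by
        gcongr; linarith
    _ ≤ Real.exp T * ((∑ p ∈ s, w p) * Real.exp (m + δ ^ 2)) := by
        gcongr; linarith [Real.add_one_le_exp (m + δ ^ 2)]
    _ = (∑ p ∈ s, w p) * Real.exp (T + m + δ ^ 2) := by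
        rw [add_assoc T, Real.exp_add T]; ring

namespace IsRoundedDual

variable {n : ℕ} {χ : ℝ} {α β : Fin n → ℤ} {D P : Fin n → Fin n → ℝ}

lemma abs_mul_sub_mul_sub_le {αt βt : Fin n → ℤ} {D' P' : Fin n → Fin n → ℝ}
    (h : IsRoundedDual χ α β D P) (h' : IsRoundedDual χ (α + αt) (β + βt) D' P')
    (i j : Fin n) :
    |P' i j * D' i j - (P i j * D i j + ((αt i : ℝ) - βt j))| ≤ χ * D' i j + χ * D i j := by
  have e : P' i j * D' i j - (P i j * D i j + ((αt i : ℝ) - βt j)) =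
      (P' i j * D' i j - ((((α + αt) i : ℤ) : ℝ) - ((β + βt) j : ℤ))) -
        (P i j * D i j - ((α i : ℝ) - β j)) := by
    push_cast [Pi.add_apply]; ring
  rw [e]
  exact (abs_sub _ _).trans (add_le_add (h'.abs_mul_sub_le i j) (h.abs_mul_sub_le i j))

end IsRoundedDual

lemma wt_le_wt_mul_exp {n : ℕ} {η ε σ b : ℝ} {C D P D' P' : Fin n → Fin n → ℝ} {i j : Fin n}
    (hC : 0 < C i j) (hη : 0 ≤ η) (hσ : |σ| = 1)
    (hclose : |P' i j * D' i j - (P i j * D i j + b)| ≤ ε * C i j) :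
    wt η C D' P' i j σ ≤ wt η C D P i j σ * Real.exp (η * (σ * (b / C i j)) + η * ε) := by
  have hσclose : σ * (P' i j * D' i j - (P i j * D i j + b)) ≤ ε * C i j := by
    calc _ ≤ |σ * (P' i j * D' i j - (P i j * D i j + b))| := le_abs_self _
      _ ≤ ε * C i j := by rwa [abs_mul, hσ, one_mul]
  have hdiv : σ * (P' i j * D' i j - (P i j * D i j + b)) / C i j ≤ ε :=
    (div_le_iff₀ hC).mpr hσclose
  rw [wt, wt, ← Real.exp_add, Real.exp_le_exp]
  have e : η * (σ * P' i j) * D' i j / C i j - (η * (σ * P i j) * D i j / C i j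
      + η * (σ * (b / C i j))) = η * (σ * (P' i j * D' i j - (P i j * D i j + b)) / C i j) := by
    field_simp
  nlinarith [mul_le_mul_of_nonneg_left hdiv hη]

lemma totW_pos {n : ℕ} (hn : 1 ≤ n) (η : ℝ) (C D P : Fin n → Fin n → ℝ) :
    0 < totW η C D P := by
  have : Nonempty (Fin n) := ⟨⟨0, hn⟩⟩
  exact sum_pos (fun i _ => sum_pos (fun j _ => add_pos (Real.exp_pos _) (Real.exp_pos _))
    univ_nonempty) univ_nonempty

lemma totW_eq_sum_signedPairs {n : ℕ} (η : ℝ) (C D P : Fin n → Fin n → ℝ) :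
    totW η C D P = ∑ p ∈ signedPairs n, wt η C D P p.1 p.2.1 p.2.2 :=
  sum_sum_add_neg_eq_sum_signedPairs (wt η C D P)

lemma sum_lamOf_mul_eq {n : ℕ} (η : ℝ) (C D P : Fin n → Fin n → ℝ)
    (g : Fin n → Fin n → ℝ → ℝ) :
    ∑ i, ∑ j, (lamOf η C D P i j 1 * g i j 1 + lamOf η C D P i j (-1) * g i j (-1)) =
      (∑ p ∈ signedPairs n, wt η C D P p.1 p.2.1 p.2.2 * g p.1 p.2.1 p.2.2) / totW η C D P := by
  rw [sum_sum_add_neg_eq_sum_signedPairs (fun i j σ => lamOf η C D P i j σ * g i j σ), sum_div]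
  simp only [lamOf, div_mul_eq_mul_div]

lemma totW_le_totW_mul_exp {n : ℕ} (hn : 1 ≤ n) {η ε K m : ℝ}
    {C D P D' P' b : Fin n → Fin n → ℝ} (hC : ∀ i j, 0 < C i j) (hη : 0 < η) (hηK : η * K ≤ 1)
    (hb : ∀ i j, |b i j| ≤ K * C i j)
    (hclose : ∀ i j, |P' i j * D' i j - (P i j * D i j + b i j)| ≤ ε * C i j)
    (hmean : ∑ i, ∑ j, (lamOf η C D P i j 1 * (1 * (b i j / C i j)) +
      lamOf η C D P i j (-1) * ((-1) * (b i j / C i j))) ≤ m) :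
    totW η C D' P' ≤ totW η C D P * Real.exp (η * ε + η * m + (η * K) ^ 2) := by
  have hy : ∀ i j σ, |σ| = 1 → |η * (σ * (b i j / C i j))| ≤ η * K := by
    intro i j σ hσ
    rw [abs_mul, abs_mul, hσ, one_mul, abs_of_pos hη, abs_div, abs_of_pos (hC i j)]
    gcongr
    exact (div_le_iff₀ (hC i j)).mpr (hb i j)
  rw [sum_lamOf_mul_eq η C D P fun i j σ => σ * (b i j / C i j),
    div_le_iff₀ (totW_pos hn η C D P)] at hmean
  rw [totW_eq_sum_signedPairs, totW_eq_sum_signedPairs]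
  refine sum_le_sum_mul_exp_of_le_mul_exp (signedPairs n)
    (w := fun p => wt η C D P p.1 p.2.1 p.2.2) (w' := fun p => wt η C D' P' p.1 p.2.1 p.2.2)
    (y := fun p => η * (p.2.2 * (b p.1 p.2.1 / C p.1 p.2.1)))
    (fun p _ => (Real.exp_pos _).le) hηK (fun p hp => hy _ _ _ (abs_eq_one_of_mem_signedPairs hp))
    (fun p hp => wt_le_wt_mul_exp (hC _ _) hη.le (abs_eq_one_of_mem_signedPairs hp) (hclose _ _))
    ?_
  rw [← totW_eq_sum_signedPairs]
  calc _ = η * ∑ p ∈ signedPairs n,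
          wt η C D P p.1 p.2.1 p.2.2 * (p.2.2 * (b p.1 p.2.1 / C p.1 p.2.1)) := by
        rw [mul_sum]; exact sum_congr rfl fun p _ => by ring
    _ ≤ η * (m * totW η C D P) := by gcongr
    _ = totW η C D P * (η * m) := by ring

/-- one step of MWU decreases the total weight:
`W' ≤ W·exp(η·(2χ(r+1)K + ṽ − γ + C₀·η·K²))`. -/
theorem total_weight_decrease :
    ∃ C₀ : ℝ, 0 < C₀ ∧
    ∀ (n : ℕ), 1 ≤ n →
    ∀ (χ K η γ t : ℝ), χ ∈ Set.Ioo (0 : ℝ) 1 → 1 ≤ K → 0 < η → η ≤ 1 / (100 * K) →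
      0 < γ → 0 < t →
    ∀ (r : ℕ) (C : Fin n → Fin n → ℝ), (∀ i j, 0 < C i j) →
    ∀ (α β αt βt : Fin n → ℤ) (D P D' P' : Fin n → Fin n → ℝ),
      IsRoundedDual χ α β D P →
      IsRoundedDual χ (α + αt) (β + βt) D' P' →
      (∀ i j, D i j ≤ ((r : ℝ) + 1) * K * C i j) →
      (∀ i j, D' i j ≤ ((r : ℝ) + 1) * K * C i j) →
    ∀ vt : ℝ, vt = (1 / t) * ((∑ i, (αt i : ℝ)) - ∑ j, (βt j : ℝ)) →
      (∑ i, ∑ j,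
        (lamOf η C D P i j 1 * (1 * (((αt i : ℝ) - (βt j : ℝ)) / C i j)) +
         lamOf η C D P i j (-1) * ((-1) * (((αt i : ℝ) - (βt j : ℝ)) / C i j)))) ≤
        vt - γ →
      (∀ i j, |(αt i : ℝ) - (βt j : ℝ)| ≤ K * C i j) →
      |vt| ≤ K →
      totW η C D' P' ≤
        totW η C D P *
          Real.exp (η * (2 * χ * ((r : ℝ) + 1) * K + vt - γ + C₀ * η * K ^ 2)) := by
  refine ⟨1, one_pos, ?_⟩
  intro n hn χ K η γ t hχ hK hη hηK _ _ r C hC α β αt βt D P D' P' hdual hdual' hD hD' vt _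
    hmean habs _
  have hηK' : η * K ≤ 1 := by
    rw [le_div_iff₀ (by linarith)] at hηK
    nlinarith
  have hclose : ∀ i j, |P' i j * D' i j - (P i j * D i j + ((αt i : ℝ) - βt j))| ≤
      2 * χ * ((r : ℝ) + 1) * K * C i j :=
    fun i j => (hdual.abs_mul_sub_mul_sub_le hdual' i j).trans
      (by nlinarith [hD i j, hD' i j, hχ.1])
  convert totW_le_totW_mul_exp hn hC hη hηK' habs hclose hmean using 3
  ring
end

section
/- There is an absolute constant z₀ such that for every real z ≥ z₀ the following holds. Let X and Y be finite sets, let L ⊆ X×Y with |L| ≤ 0.1·z², and let (x,y) ∈ L satisfy deg_L(x) ≤ 0.5·z and deg_L(y) ≤ 0.5·z. Let X' ⊆ X and Y' ⊆ Y be independent 1/z-subsamples. Then Pr[(x,y) ∈ X'×Y' and (X'×Y') ∩ L = {(x,y)}] ≥ 0.1·z^{−2}. -/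
open Finset

open Classical in
/-- The probability, over independent `1/z`-subsamples `X' ⊆ X` and `Y' ⊆ Y`
(each element kept independently with probability `1/z`), of the event `E X' Y'`. -/
noncomputable def pairPr {α β : Type} [DecidableEq α] [DecidableEq β]
    (X : Finset α) (Y : Finset β) (z : ℝ) (E : Finset α → Finset β → Prop) : ℝ :=
  ∑ S ∈ X.powerset, ∑ T ∈ Y.powerset,
    ((1 / z) ^ S.card * (1 - 1 / z) ^ (X.card - S.card)) *
      ((1 / z) ^ T.card * (1 - 1 / z) ^ (Y.card - T.card)) *
      (if E S T then 1 else 0)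

section Aux
open Classical

variable {α β : Type} [DecidableEq α] [DecidableEq β]

lemma ite_congr_any {γ : Sort*} {c d : Prop} (h1 : Decidable c) (h2 : Decidable d)
    (h : c ↔ d) (a b : γ) : @ite γ c h1 a b = @ite γ d h2 a b := by
  by_cases hc : c
  · rw [if_pos hc, if_pos (h.mp hc)]
  · rw [if_neg hc, if_neg fun hd => hc (h.mpr hd)]

lemma sum_w (X : Finset α) (p : ℝ) :
    ∑ S ∈ X.powerset, p ^ S.card * (1 - p) ^ (X.card - S.card) = 1 := by
  have h := Finset.prod_add (fun _ : α => p) (fun _ : α => (1 - p)) X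
  simp only [Finset.prod_const] at h
  have h2 : ∀ t ∈ X.powerset, p ^ t.card * (1-p) ^ (X.card - t.card)
      = p ^ t.card * (1-p) ^ (X \ t).card := by
    intro t ht
    rw [Finset.card_sdiff_of_subset (Finset.mem_powerset.mp ht)]
  rw [Finset.sum_congr rfl h2, ← h]
  norm_num

lemma sum_w_cond (X A B : Finset α) (p : ℝ)
    (hA : A ⊆ X) (hB : B ⊆ X) (hAB : Disjoint A B) :
    ∑ S ∈ X.powerset, p ^ S.card * (1 - p) ^ (X.card - S.card) *
      (if A ⊆ S ∧ Disjoint S B then 1 else 0)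
    = p ^ A.card * (1 - p) ^ B.card := by
  classical
  set U := X \ (A ∪ B) with hU
  have hUcard : U.card = X.card - A.card - B.card := by
    rw [hU, Finset.card_sdiff_of_subset (Finset.union_subset hA hB),
      Finset.card_union_of_disjoint hAB]
    omega
  have hAX : A.card ≤ X.card := Finset.card_le_card hA
  have hABX : A.card + B.card ≤ X.card := by
    have := Finset.card_le_card (Finset.union_subset hA hB)
    rwa [Finset.card_union_of_disjoint hAB] at this
  simp only [mul_ite, mul_one, mul_zero]
  rw [← Finset.sum_filter]
  have key : ∑ S ∈ X.powerset.filter (fun S => A ⊆ S ∧ Disjoint S B),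
        p ^ S.card * (1 - p) ^ (X.card - S.card)
      = ∑ S' ∈ U.powerset,
        (p ^ A.card * (1-p) ^ B.card) * (p ^ S'.card * (1 - p) ^ (U.card - S'.card)) := by
    apply Finset.sum_bij' (fun S _ => S \ A) (fun S' _ => S' ∪ A)
    · intro S hS
      simp only [Finset.mem_filter, Finset.mem_powerset] at hS
      obtain ⟨hSX, hAS, hSB⟩ := hS
      rw [Finset.mem_powerset, hU]
      intro a ha
      simp only [Finset.mem_sdiff] at ha ⊢
      refine ⟨hSX ha.1, ?_⟩
      simp only [Finset.mem_union]
      rintro (h | h)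
      · exact ha.2 h
      · exact (Finset.disjoint_left.mp hSB ha.1) h
    · intro S' hS'
      rw [Finset.mem_powerset] at hS'
      simp only [Finset.mem_filter, Finset.mem_powerset]
      have hS'X : S' ⊆ X := hS'.trans (Finset.sdiff_subset)
      refine ⟨Finset.union_subset hS'X hA, Finset.subset_union_right, ?_⟩
      rw [Finset.disjoint_left]
      intro a ha hb
      rcases Finset.mem_union.mp ha with h | h
      · have := hS' h
        rw [hU, Finset.mem_sdiff] at this
        exact this.2 (Finset.mem_union_right _ hb)
      · exact (Finset.disjoint_left.mp hAB h) hb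
    · intro S hS
      simp only [Finset.mem_filter, Finset.mem_powerset] at hS
      exact Finset.sdiff_union_of_subset hS.2.1
    · intro S' hS'
      rw [Finset.mem_powerset] at hS'
      have : Disjoint S' A := by
        rw [Finset.disjoint_left]
        intro a ha hb
        have := hS' ha
        rw [hU, Finset.mem_sdiff] at this
        exact this.2 (Finset.mem_union_left _ hb)
      rw [Finset.union_sdiff_distrib, Finset.sdiff_self, Finset.union_empty,
        Finset.sdiff_eq_self_of_disjoint this]
    · intro S hS
      simp only [Finset.mem_filter, Finset.mem_powerset] at hS
      obtain ⟨hSX, hAS, hSB⟩ := hS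
      have h1 : (S \ A).card = S.card - A.card := Finset.card_sdiff_of_subset hAS
      have h2 : A.card ≤ S.card := Finset.card_le_card hAS
      have h3 : S.card ≤ X.card := Finset.card_le_card hSX
      have h4 : S.card + B.card ≤ X.card := by
        have : Disjoint S B := hSB
        have := Finset.card_le_card (Finset.union_subset hSX hB)
        rwa [Finset.card_union_of_disjoint hSB] at this
      rw [h1, mul_mul_mul_comm, ← pow_add, ← pow_add]
      congr 2 <;> omega
  rw [key, ← Finset.mul_sum, sum_w, mul_one]

end Aux

section Aux2
open Classical

variable {α β : Type} [DecidableEq α] [DecidableEq β]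

lemma pairPr_congr (X : Finset α) (Y : Finset β) (z : ℝ)
    (E F : Finset α → Finset β → Prop) (h : ∀ S T, E S T ↔ F S T) :
    pairPr X Y z E = pairPr X Y z F := by
  unfold pairPr
  refine Finset.sum_congr rfl fun S _ => Finset.sum_congr rfl fun T _ => ?_
  rw [if_congr (h S T) rfl rfl]

lemma pairPr_mono (X : Finset α) (Y : Finset β) (z : ℝ) (hz : 1 ≤ z)
    (E F : Finset α → Finset β → Prop) (h : ∀ S T, E S T → F S T) :
    pairPr X Y z E ≤ pairPr X Y z F := by
  have hz0 : (0:ℝ) < z := by linarith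
  have hp0 : (0:ℝ) ≤ 1/z := by positivity
  have hp1 : (1:ℝ)/z ≤ 1 := by rw [div_le_one hz0]; linarith
  unfold pairPr
  refine Finset.sum_le_sum fun S _ => Finset.sum_le_sum fun T _ => ?_
  have hw : (0:ℝ) ≤ ((1 / z) ^ S.card * (1 - 1 / z) ^ (X.card - S.card)) *
      ((1 / z) ^ T.card * (1 - 1 / z) ^ (Y.card - T.card)) := by
    have : (0:ℝ) ≤ 1 - 1/z := by linarith
    positivity
  apply mul_le_mul_of_nonneg_left _ hw
  by_cases hE : E S T
  · simp [hE, h S T hE]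
  · by_cases hF : F S T <;> simp [hE, hF]

lemma pairPr_or_le (X : Finset α) (Y : Finset β) (z : ℝ) (hz : 1 ≤ z)
    (E F : Finset α → Finset β → Prop) :
    pairPr X Y z (fun S T => E S T ∨ F S T) ≤ pairPr X Y z E + pairPr X Y z F := by
  have hz0 : (0:ℝ) < z := by linarith
  have hp1 : (1:ℝ)/z ≤ 1 := by rw [div_le_one hz0]; linarith
  unfold pairPr
  rw [← Finset.sum_add_distrib]
  refine Finset.sum_le_sum fun S _ => ?_
  rw [← Finset.sum_add_distrib]
  refine Finset.sum_le_sum fun T _ => ?_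
  rw [← mul_add]
  have hw : (0:ℝ) ≤ ((1 / z) ^ S.card * (1 - 1 / z) ^ (X.card - S.card)) *
      ((1 / z) ^ T.card * (1 - 1 / z) ^ (Y.card - T.card)) := by
    have h1 : (0:ℝ) ≤ 1 - 1/z := by linarith
    have h2 : (0:ℝ) ≤ 1/z := by positivity
    positivity
  apply mul_le_mul_of_nonneg_left _ hw
  by_cases hE : E S T <;> by_cases hF : F S T <;> simp [hE, hF]

lemma pairPr_exists_le {γ : Type} (X : Finset α) (Y : Finset β) (z : ℝ) (hz : 1 ≤ z)
    (Q : Finset γ) (Bad : γ → Finset α → Finset β → Prop) :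
    pairPr X Y z (fun S T => ∃ q ∈ Q, Bad q S T) ≤ ∑ q ∈ Q, pairPr X Y z (Bad q) := by
  classical
  induction Q using Finset.induction with
  | empty => simp [pairPr]
  | @insert a Q ha ih =>
    rw [Finset.sum_insert ha]
    calc pairPr X Y z (fun S T => ∃ q ∈ insert a Q, Bad q S T)
        = pairPr X Y z (fun S T => Bad a S T ∨ ∃ q ∈ Q, Bad q S T) := by
          apply pairPr_congr
          intro S T
          simp [Finset.mem_insert, or_and_right, exists_or]
      _ ≤ pairPr X Y z (Bad a) + pairPr X Y z (fun S T => ∃ q ∈ Q, Bad q S T) :=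
          pairPr_or_le X Y z hz _ _
      _ ≤ _ := by linarith

lemma pairPr_prod (X : Finset α) (Y : Finset β) (z : ℝ)
    (P : Finset α → Prop) (Q : Finset β → Prop) :
    pairPr X Y z (fun S T => P S ∧ Q T)
    = (∑ S ∈ X.powerset, (1/z) ^ S.card * (1 - 1/z) ^ (X.card - S.card) * (if P S then 1 else 0))
      * (∑ T ∈ Y.powerset, (1/z) ^ T.card * (1 - 1/z) ^ (Y.card - T.card) * (if Q T then 1 else 0)) := by
  unfold pairPr
  rw [Finset.sum_mul_sum]
  refine Finset.sum_congr rfl fun S _ => Finset.sum_congr rfl fun T _ => ?_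
  by_cases hP : P S <;> by_cases hQ : Q T <;> simp [hP, hQ] <;> ring

lemma pow_lower (z : ℝ) (hz : 4 ≤ z) (d : ℕ) (hd : (d:ℝ) ≤ z) :
    (0.2:ℝ) ≤ (1 - 1/z) ^ d := by
  have hz0 : (0:ℝ) < z := by linarith
  have h1 : Real.exp (-(1.5/z)) ≤ 1 - 1/z := by
    rw [Real.exp_neg]
    rw [inv_le_comm₀ (Real.exp_pos _) (by rw [sub_pos, div_lt_one hz0]; linarith)]
    calc (1 - 1/z)⁻¹ ≤ 1 + 1.5/z := by
          rw [inv_le_iff_one_le_mul₀ (by rw [sub_pos, div_lt_one hz0]; linarith)]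
          have : (1 + 1.5/z) * (1 - 1/z) = 1 + 0.5/z - 1.5/z^2 := by field_simp; ring
          rw [this]
          have : 1.5/z^2 ≤ 0.5/z := by
            rw [div_le_div_iff₀ (by positivity) hz0]
            nlinarith
          linarith
      _ ≤ Real.exp (1.5/z) := by
          have := Real.add_one_le_exp (1.5/z)
          linarith
  calc (0.2:ℝ) ≤ Real.exp (-(1.5:ℝ)) := by
        rw [Real.exp_neg]
        rw [le_inv_comm₀ (by norm_num) (Real.exp_pos _)]
        have he3 : Real.exp 3 = Real.exp 1 ^ 3 := by
          rw [← Real.exp_nat_mul]; norm_num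
        have h15 : Real.exp (1.5:ℝ) ^ 2 = Real.exp 3 := by
          rw [← Real.exp_nat_mul]; norm_num
        have hub : Real.exp 3 < 25 := by
          rw [he3]
          have h1 : Real.exp 1 ^ 3 < 2.7182818286 ^ 3 :=
            pow_lt_pow_left₀ Real.exp_one_lt_d9 (Real.exp_pos 1).le (by norm_num)
          nlinarith
        nlinarith [Real.exp_pos (1.5:ℝ)]
    _ ≤ Real.exp (↑d * -(1.5/z)) := by
        apply Real.exp_le_exp.mpr
        rw [mul_neg, neg_le_neg_iff]
        rw [mul_div_assoc']
        rw [div_le_iff₀ hz0]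
        nlinarith
    _ = Real.exp (-(1.5/z)) ^ d := Real.exp_nat_mul _ d
    _ ≤ (1 - 1/z) ^ d := pow_le_pow_left₀ (Real.exp_pos _).le h1 d

end Aux2

/-- a light pair `(x, y) ∈ L` is, with probability at least `0.1/z²`,
the unique pair of `L` surviving in `X' × Y'`. -/
theorem light_pair_unique_survivor :
    ∃ z₀ : ℝ, ∀ z : ℝ, z₀ ≤ z →
    ∀ (α β : Type) (_ : DecidableEq α) (_ : DecidableEq β)
      (X : Finset α) (Y : Finset β) (L : Finset (α × β)),
      L ⊆ X ×ˢ Y →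
      (L.card : ℝ) ≤ 0.1 * z ^ 2 →
      ∀ x y, (x, y) ∈ L →
        ((L.filter fun p => p.1 = x).card : ℝ) ≤ 0.5 * z →
        ((L.filter fun p => p.2 = y).card : ℝ) ≤ 0.5 * z →
        0.1 / z ^ 2 ≤ pairPr X Y z (fun S T =>
          x ∈ S ∧ y ∈ T ∧ (L.filter fun p => p.1 ∈ S ∧ p.2 ∈ T) = {(x, y)}) := by
  refine ⟨4, fun z hz α β instα instβ X Y L hLXY hLcard x y hxyL hdegx hdegy => ?_⟩
  have hz1 : (1:ℝ) ≤ z := by linarith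
  have hz0 : (0:ℝ) < z := by linarith
  have hxX : x ∈ X := by have := hLXY hxyL; simp [Finset.mem_product] at this; exact this.1
  have hyY : y ∈ Y := by have := hLXY hxyL; simp [Finset.mem_product] at this; exact this.2
  set Nx : Finset α := (L.filter fun q => q.2 = y ∧ q.1 ≠ x).image Prod.fst with hNxdef
  set Ny : Finset β := (L.filter fun q => q.1 = x ∧ q.2 ≠ y).image Prod.snd with hNydef
  set Lfar : Finset (α × β) := L.filter fun q => q.1 ≠ x ∧ q.2 ≠ y with hLfardef
  have hNxmem : ∀ a, a ∈ Nx ↔ ∃ q ∈ L, q.2 = y ∧ q.1 ≠ x ∧ q.1 = a := by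
    intro a
    simp only [hNxdef, Finset.mem_image, Finset.mem_filter]
    constructor
    · rintro ⟨q, ⟨hqL, h1, h2⟩, rfl⟩; exact ⟨q, hqL, h1, h2, rfl⟩
    · rintro ⟨q, hqL, h1, h2, rfl⟩; exact ⟨q, ⟨hqL, h1, h2⟩, rfl⟩
  have hNymem : ∀ b, b ∈ Ny ↔ ∃ q ∈ L, q.1 = x ∧ q.2 ≠ y ∧ q.2 = b := by
    intro b
    simp only [hNydef, Finset.mem_image, Finset.mem_filter]
    constructor
    · rintro ⟨q, ⟨hqL, h1, h2⟩, rfl⟩; exact ⟨q, hqL, h1, h2, rfl⟩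
    · rintro ⟨q, hqL, h1, h2, rfl⟩; exact ⟨q, ⟨hqL, h1, h2⟩, rfl⟩
  have hNxX : Nx ⊆ X := by
    intro a ha
    obtain ⟨q, hqL, _, _, rfl⟩ := (hNxmem a).mp ha
    have := hLXY hqL; simp [Finset.mem_product] at this; exact this.1
  have hNyY : Ny ⊆ Y := by
    intro b hb
    obtain ⟨q, hqL, _, _, rfl⟩ := (hNymem b).mp hb
    have := hLXY hqL; simp [Finset.mem_product] at this; exact this.2
  have hxNx : Disjoint ({x} : Finset α) Nx := by
    rw [Finset.disjoint_left]
    intro a ha hb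
    rw [Finset.mem_singleton] at ha
    obtain ⟨q, _, _, h2, h3⟩ := (hNxmem a).mp hb
    exact h2 (h3.trans ha)
  have hyNy : Disjoint ({y} : Finset β) Ny := by
    rw [Finset.disjoint_left]
    intro b hb hb2
    rw [Finset.mem_singleton] at hb
    obtain ⟨q, _, _, h2, h3⟩ := (hNymem b).mp hb2
    exact h2 (hb ▸ h3)
  have hNxcard : (Nx.card : ℝ) ≤ 0.5 * z := by
    refine le_trans ?_ hdegy
    have h1 : Nx.card ≤ (L.filter fun q => q.2 = y ∧ q.1 ≠ x).card := Finset.card_image_le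
    have h2 : (L.filter fun q => q.2 = y ∧ q.1 ≠ x) ⊆ (L.filter fun p => p.2 = y) := by
      intro q hq
      rw [Finset.mem_filter] at hq ⊢
      exact ⟨hq.1, hq.2.1⟩
    exact_mod_cast h1.trans (Finset.card_le_card h2)
  have hNycard : (Ny.card : ℝ) ≤ 0.5 * z := by
    refine le_trans ?_ hdegx
    have h1 : Ny.card ≤ (L.filter fun q => q.1 = x ∧ q.2 ≠ y).card := Finset.card_image_le
    have h2 : (L.filter fun q => q.1 = x ∧ q.2 ≠ y) ⊆ (L.filter fun p => p.1 = x) := by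
      intro q hq
      rw [Finset.mem_filter] at hq ⊢
      exact ⟨hq.1, hq.2.1⟩
    exact_mod_cast h1.trans (Finset.card_le_card h2)
  -- the events
  have hGoodImp : ∀ S T,
      ((({x} : Finset α) ⊆ S ∧ Disjoint S Nx) ∧ (({y} : Finset β) ⊆ T ∧ Disjoint T Ny)) ∧
        (∀ q ∈ Lfar, ¬(q.1 ∈ S ∧ q.2 ∈ T)) →
      (x ∈ S ∧ y ∈ T ∧ (L.filter fun p => p.1 ∈ S ∧ p.2 ∈ T) = {(x, y)}) := by
    rintro S T ⟨⟨⟨hxS, hSNx⟩, hyT, hTNy⟩, hfar⟩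
    rw [Finset.singleton_subset_iff] at hxS hyT
    refine ⟨hxS, hyT, ?_⟩
    apply Finset.ext
    intro q
    simp only [Finset.mem_filter, Finset.mem_singleton]
    constructor
    · rintro ⟨hqL, hq1, hq2⟩
      by_cases h1 : q.1 = x
      · by_cases h2 : q.2 = y
        · exact Prod.ext h1 h2
        · exfalso
          have : q.2 ∈ Ny := (hNymem q.2).mpr ⟨q, hqL, h1, h2, rfl⟩
          exact (Finset.disjoint_left.mp hTNy hq2) this
      · by_cases h2 : q.2 = y
        · exfalso
          have : q.1 ∈ Nx := (hNxmem q.1).mpr ⟨q, hqL, h2, h1, rfl⟩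
          exact (Finset.disjoint_left.mp hSNx hq1) this
        · exfalso
          have hqfar : q ∈ Lfar := by
            rw [hLfardef, Finset.mem_filter]; exact ⟨hqL, h1, h2⟩
          exact hfar q hqfar ⟨hq1, hq2⟩
    · rintro rfl
      exact ⟨hxyL, hxS, hyT⟩
  -- step B implication
  have hBaseImp : ∀ (S : Finset α) (T : Finset β),
      ((({x} : Finset α) ⊆ S ∧ Disjoint S Nx) ∧ (({y} : Finset β) ⊆ T ∧ Disjoint T Ny)) →
      (((({x} : Finset α) ⊆ S ∧ Disjoint S Nx) ∧ (({y} : Finset β) ⊆ T ∧ Disjoint T Ny)) ∧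
          (∀ q ∈ Lfar, ¬(q.1 ∈ S ∧ q.2 ∈ T)))
        ∨ (∃ q ∈ Lfar, ({x, q.1} : Finset α) ⊆ S ∧ ({y, q.2} : Finset β) ⊆ T) := by
    intro S T hbase
    by_cases hall : ∀ q ∈ Lfar, ¬(q.1 ∈ S ∧ q.2 ∈ T)
    · exact Or.inl ⟨hbase, hall⟩
    · push_neg at hall
      obtain ⟨q, hqfar, hq1, hq2⟩ := hall
      refine Or.inr ⟨q, hqfar, ?_, ?_⟩
      · rw [Finset.insert_subset_iff, Finset.singleton_subset_iff]
        exact ⟨Finset.singleton_subset_iff.mp hbase.1.1, hq1⟩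
      · rw [Finset.insert_subset_iff, Finset.singleton_subset_iff]
        exact ⟨Finset.singleton_subset_iff.mp hbase.2.1, hq2⟩
  -- probability of the base event
  have hsumX : ∑ S ∈ X.powerset, (1/z) ^ S.card * (1 - 1/z) ^ (X.card - S.card) *
        (if ({x} : Finset α) ⊆ S ∧ Disjoint S Nx then 1 else 0)
      = (1/z) * (1 - 1/z) ^ Nx.card := by
    rw [sum_w_cond X {x} Nx (1/z) (Finset.singleton_subset_iff.mpr hxX) hNxX hxNx,
      Finset.card_singleton, pow_one]
  have hsumY : ∑ T ∈ Y.powerset, (1/z) ^ T.card * (1 - 1/z) ^ (Y.card - T.card) *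
        (if ({y} : Finset β) ⊆ T ∧ Disjoint T Ny then 1 else 0)
      = (1/z) * (1 - 1/z) ^ Ny.card := by
    rw [sum_w_cond Y {y} Ny (1/z) (Finset.singleton_subset_iff.mpr hyY) hNyY hyNy,
      Finset.card_singleton, pow_one]
  have hbaseEq : pairPr X Y z (fun S T =>
        (({x} : Finset α) ⊆ S ∧ Disjoint S Nx) ∧ (({y} : Finset β) ⊆ T ∧ Disjoint T Ny))
      = ((1/z) * (1 - 1/z) ^ Nx.card) * ((1/z) * (1 - 1/z) ^ Ny.card) := by
    rw [pairPr_prod]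
    congr 1
    · refine Eq.trans ?_ hsumX
      refine Finset.sum_congr rfl fun S _ => ?_
      congr 1
      exact ite_congr_any _ _ Iff.rfl 1 0
    · refine Eq.trans ?_ hsumY
      refine Finset.sum_congr rfl fun T _ => ?_
      congr 1
      exact ite_congr_any _ _ Iff.rfl 1 0
  -- probability of each bad event
  have hbadEq : ∀ q ∈ Lfar, pairPr X Y z (fun S T =>
        ({x, q.1} : Finset α) ⊆ S ∧ ({y, q.2} : Finset β) ⊆ T)
      = (1/z)^2 * (1/z)^2 := by
    intro q hqfar
    have hqL : q ∈ L := Finset.mem_filter.mp (hLfardef ▸ hqfar) |>.1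
    have hq1 : q.1 ≠ x := (Finset.mem_filter.mp (hLfardef ▸ hqfar)).2.1
    have hq2 : q.2 ≠ y := (Finset.mem_filter.mp (hLfardef ▸ hqfar)).2.2
    have hq1X : q.1 ∈ X := by
      have := hLXY hqL; simp [Finset.mem_product] at this; exact this.1
    have hq2Y : q.2 ∈ Y := by
      have := hLXY hqL; simp [Finset.mem_product] at this; exact this.2
    have hc1 : ({x, q.1} : Finset α).card = 2 := Finset.card_pair (Ne.symm hq1)
    have hc2 : ({y, q.2} : Finset β).card = 2 := Finset.card_pair (Ne.symm hq2)
    have hs1 : ({x, q.1} : Finset α) ⊆ X := by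
      rw [Finset.insert_subset_iff, Finset.singleton_subset_iff]; exact ⟨hxX, hq1X⟩
    have hs2 : ({y, q.2} : Finset β) ⊆ Y := by
      rw [Finset.insert_subset_iff, Finset.singleton_subset_iff]; exact ⟨hyY, hq2Y⟩
    rw [pairPr_prod]
    have e1 : ∑ S ∈ X.powerset, (1/z) ^ S.card * (1 - 1/z) ^ (X.card - S.card) *
          (if ({x, q.1} : Finset α) ⊆ S then 1 else 0) = (1/z)^2 := by
      have := sum_w_cond X {x, q.1} ∅ (1/z) hs1 (Finset.empty_subset X)
        (Finset.disjoint_empty_right _)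
      rw [hc1, Finset.card_empty, pow_zero, mul_one] at this
      rw [← this]
      refine Finset.sum_congr rfl fun S _ => ?_
      congr 1
      exact ite_congr_any _ _ (Iff.symm (and_iff_left (Finset.disjoint_empty_right S))) 1 0
    have e2 : ∑ T ∈ Y.powerset, (1/z) ^ T.card * (1 - 1/z) ^ (Y.card - T.card) *
          (if ({y, q.2} : Finset β) ⊆ T then 1 else 0) = (1/z)^2 := by
      have := sum_w_cond Y {y, q.2} ∅ (1/z) hs2 (Finset.empty_subset Y)
        (Finset.disjoint_empty_right _)
      rw [hc2, Finset.card_empty, pow_zero, mul_one] at this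
      rw [← this]
      refine Finset.sum_congr rfl fun T _ => ?_
      congr 1
      exact ite_congr_any _ _ (Iff.symm (and_iff_left (Finset.disjoint_empty_right T))) 1 0
    congr 1
    · refine Eq.trans ?_ e1
      refine Finset.sum_congr rfl fun S _ => ?_
      congr 1
      exact ite_congr_any _ _ Iff.rfl 1 0
    · refine Eq.trans ?_ e2
      refine Finset.sum_congr rfl fun T _ => ?_
      congr 1
      exact ite_congr_any _ _ Iff.rfl 1 0
  -- assemble
  have step1 : pairPr X Y z (fun S T =>
        ((({x} : Finset α) ⊆ S ∧ Disjoint S Nx) ∧ (({y} : Finset β) ⊆ T ∧ Disjoint T Ny)) ∧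
          (∀ q ∈ Lfar, ¬(q.1 ∈ S ∧ q.2 ∈ T)))
      ≤ pairPr X Y z (fun S T =>
        x ∈ S ∧ y ∈ T ∧ (L.filter fun p => p.1 ∈ S ∧ p.2 ∈ T) = {(x, y)}) :=
    pairPr_mono X Y z hz1 _ _ hGoodImp
  have step2 : pairPr X Y z (fun S T =>
        (({x} : Finset α) ⊆ S ∧ Disjoint S Nx) ∧ (({y} : Finset β) ⊆ T ∧ Disjoint T Ny))
      ≤ pairPr X Y z (fun S T =>
          ((({x} : Finset α) ⊆ S ∧ Disjoint S Nx) ∧ (({y} : Finset β) ⊆ T ∧ Disjoint T Ny)) ∧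
            (∀ q ∈ Lfar, ¬(q.1 ∈ S ∧ q.2 ∈ T)))
        + pairPr X Y z (fun S T =>
            ∃ q ∈ Lfar, ({x, q.1} : Finset α) ⊆ S ∧ ({y, q.2} : Finset β) ⊆ T) := by
    refine le_trans (pairPr_mono X Y z hz1 _ _ hBaseImp) ?_
    exact pairPr_or_le X Y z hz1 _ _
  have step3 : pairPr X Y z (fun S T =>
        ∃ q ∈ Lfar, ({x, q.1} : Finset α) ⊆ S ∧ ({y, q.2} : Finset β) ⊆ T)
      ≤ 0.1 / z^2 := by
    refine le_trans (pairPr_exists_le X Y z hz1 Lfar _) ?_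
    have : ∑ q ∈ Lfar, pairPr X Y z (fun S T =>
          ({x, q.1} : Finset α) ⊆ S ∧ ({y, q.2} : Finset β) ⊆ T)
        = Lfar.card * ((1/z)^2 * (1/z)^2) := by
      rw [Finset.sum_congr rfl hbadEq, Finset.sum_const, nsmul_eq_mul]
    rw [this]
    have hLfarL : (Lfar.card : ℝ) ≤ 0.1 * z^2 := by
      refine le_trans ?_ hLcard
      exact_mod_cast Finset.card_le_card (Finset.filter_subset _ L)
    have hpos : (0:ℝ) ≤ (1/z)^2 * (1/z)^2 := by positivity
    calc (Lfar.card : ℝ) * ((1/z)^2 * (1/z)^2)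
        ≤ (0.1 * z^2) * ((1/z)^2 * (1/z)^2) := by
          exact mul_le_mul_of_nonneg_right hLfarL hpos
      _ = 0.1 / z^2 := by field_simp
  have step4 : 0.2 / z^2 ≤ pairPr X Y z (fun S T =>
        (({x} : Finset α) ⊆ S ∧ Disjoint S Nx) ∧ (({y} : Finset β) ⊆ T ∧ Disjoint T Ny)) := by
    rw [hbaseEq]
    have hd : ((Nx.card + Ny.card : ℕ) : ℝ) ≤ z := by
      push_cast; linarith
    have hpow := pow_lower z hz (Nx.card + Ny.card) hd
    have heq : ((1/z) * (1 - 1/z) ^ Nx.card) * ((1/z) * (1 - 1/z) ^ Ny.card)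
        = (1/z)^2 * (1 - 1/z) ^ (Nx.card + Ny.card) := by
      rw [pow_add]; ring
    rw [heq]
    have h1 : (0:ℝ) < (1/z)^2 := by positivity
    calc (0.2:ℝ) / z^2 = (1/z)^2 * 0.2 := by field_simp
      _ ≤ (1/z)^2 * (1 - 1/z) ^ (Nx.card + Ny.card) := by
          exact mul_le_mul_of_nonneg_left hpow h1.le
  have hGood : 0.1 / z^2 ≤ pairPr X Y z (fun S T =>
      ((({x} : Finset α) ⊆ S ∧ Disjoint S Nx) ∧ (({y} : Finset β) ⊆ T ∧ Disjoint T Ny)) ∧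
        (∀ q ∈ Lfar, ¬(q.1 ∈ S ∧ q.2 ∈ T))) := by
    have h4 : (0.2:ℝ) / z^2 = 0.1/z^2 + 0.1/z^2 := by ring
    linarith
  exact le_trans hGood step1
end

section
/- There is an absolute constant z₀ such that for every real z ≥ z₀ the following holds. Let X and Y be finite sets, let L' ⊆ L'' ⊆ X×Y with |L''| ≤ 0.1·z², and let x ∈ X satisfy deg_{L'}(x) > 0.5·z. Let X' ⊆ X and Y' ⊆ Y be independent 1/z-subsamples. Then Pr[ x ∈ X', and N_{L'}(x) ∩ Y' ≠ ∅, and L'' ∩ ((X'∖{x}) × Y') = ∅ ] ≥ 0.25/z, where N_{L'}(x) = {y ∈ Y : (x,y) ∈ L'}. -/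
/-!
A pair of independent `1/z`-subsamples of `X` and `Y` is the same as one `1/z`-subsample `U`
of `X ⊕ Y`. Conditioning on `inl x ∈ U` costs the factor `1/z` and leaves a `1/z`-subsample `V`
of `(X ⊕ Y) ∖ {inl x}`. It meets the more than `z/2` right copies of the `L'`-neighbours of `x`
with probability `1 - (1 - 1/z)^(z/2) ≥ 1 - e^(-1/2) > 0.35`, and by the union bound it contains
both ends of some pair of `L''` with probability at most `|L''|/z² ≤ 0.1`.
-/

open Finset

namespace Subsample

variable {α : Type*}

noncomputable def weight (X : Finset α) (p : ℝ) (S : Finset α) : ℝ :=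
  p ^ #S * (1 - p) ^ (#X - #S)

open Classical in
noncomputable def prob (X : Finset α) (p : ℝ) (B : Finset α → Prop) : ℝ :=
  ∑ S ∈ X.powerset, weight X p S * if B S then 1 else 0

variable {X : Finset α} {p : ℝ}

lemma weight_nonneg (hp₀ : 0 ≤ p) (hp₁ : p ≤ 1) (S : Finset α) : 0 ≤ weight X p S :=
  mul_nonneg (pow_nonneg hp₀ _) (pow_nonneg (sub_nonneg.2 hp₁) _)

lemma sum_weight (X : Finset α) (p : ℝ) : ∑ S ∈ X.powerset, weight X p S = 1 := by
  simpa [weight] using sum_pow_mul_eq_add_pow p (1 - p) X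

lemma weight_of_subset_erase [DecidableEq α] {a : α} (ha : a ∈ X) {R : Finset α}
    (hR : R ⊆ X.erase a) : weight X p R = (1 - p) * weight (X.erase a) p R := by
  have : #X - #R = #(X.erase a) - #R + 1 := by
    have := card_le_card hR; have := card_erase_add_one ha; omega
  rw [weight, weight, this, pow_succ]; ring

lemma weight_insert_of_subset_erase [DecidableEq α] {a : α} (ha : a ∈ X) {R : Finset α}
    (hR : R ⊆ X.erase a) : weight X p (insert a R) = p * weight (X.erase a) p R := by
  have haR : a ∉ R := fun h => notMem_erase a X (hR h)
  have : #X - #(insert a R) = #(X.erase a) - #R := by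
    have := card_erase_add_one ha; rw [card_insert_of_notMem haR]; omega
  rw [weight, weight, this, card_insert_of_notMem haR, pow_succ]; ring

variable {B C : Finset α → Prop}

lemma prob_congr (h : ∀ S ⊆ X, B S ↔ C S) : prob X p B = prob X p C := by
  classical
  refine sum_congr rfl fun S hS => ?_
  rw [if_congr (h S (mem_powerset.1 hS)) rfl rfl]

lemma prob_mono (hp₀ : 0 ≤ p) (hp₁ : p ≤ 1) (h : ∀ S, B S → C S) :
    prob X p B ≤ prob X p C := by
  classical
  refine sum_le_sum fun S _ => mul_le_mul_of_nonneg_left ?_ (weight_nonneg hp₀ hp₁ S)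
  split_ifs with hB hC <;> first | exact absurd (h S hB) hC | norm_num

@[simp] lemma prob_true : prob X p (fun _ => True) = 1 := by
  simp [prob, sum_weight]

lemma prob_eq_zero (h : ∀ S ⊆ X, ¬ B S) : prob X p B = 0 :=
  sum_eq_zero fun S hS => by simp [h S (mem_powerset.1 hS)]

lemma prob_and_add_prob_and_not :
    prob X p (fun S => B S ∧ C S) + prob X p (fun S => B S ∧ ¬ C S) = prob X p B := by
  classical
  rw [prob, prob, prob, ← sum_add_distrib]
  refine sum_congr rfl fun S _ => ?_
  by_cases hB : B S <;> by_cases hC : C S <;> simp [hB, hC]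

lemma prob_sub_prob_le_prob_and_not (hp₀ : 0 ≤ p) (hp₁ : p ≤ 1) :
    prob X p B - prob X p C ≤ prob X p (fun S => B S ∧ ¬ C S) := by
  have hsplit := prob_and_add_prob_and_not (X := X) (p := p) (B := B) (C := fun S => ¬ C S)
  have hle := prob_mono (X := X) hp₀ hp₁ (B := fun S => B S ∧ ¬ ¬ C S) (C := C)
    fun S h => not_not.1 h.2
  linarith

lemma prob_exists_le_sum {ι : Type*} (hp₀ : 0 ≤ p) (hp₁ : p ≤ 1) (s : Finset ι)
    (B : ι → Finset α → Prop) :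
    prob X p (fun S => ∃ i ∈ s, B i S) ≤ ∑ i ∈ s, prob X p (B i) := by
  classical
  calc prob X p (fun S => ∃ i ∈ s, B i S)
      ≤ ∑ S ∈ X.powerset, weight X p S * ∑ i ∈ s, if B i S then 1 else 0 := by
        refine sum_le_sum fun S _ => mul_le_mul_of_nonneg_left ?_ (weight_nonneg hp₀ hp₁ S)
        split_ifs with h
        · obtain ⟨i, hi, hBi⟩ := h
          simpa [hBi] using single_le_sum (f := fun j => if B j S then (1 : ℝ) else 0)
            (fun j _ => by positivity) hi
        · exact sum_nonneg fun j _ => by positivity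
    _ = ∑ i ∈ s, prob X p (B i) := by
        simp only [prob, mul_sum]
        exact sum_comm

section Split

variable [DecidableEq α] {a : α}

lemma prob_eq_add_of_mem (ha : a ∈ X) (B : Finset α → Prop) :
    prob X p B = (1 - p) * prob (X.erase a) p B +
      p * prob (X.erase a) p (fun R => B (insert a R)) := by
  classical
  conv_lhs => rw [prob, ← insert_erase ha, sum_powerset_insert (notMem_erase a X)]
  simp only [prob, mul_sum]
  congr 1 <;> refine sum_congr rfl fun R hR => ?_
  · rw [insert_erase ha, weight_of_subset_erase ha (mem_powerset.1 hR), mul_assoc]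
  · rw [insert_erase ha, weight_insert_of_subset_erase ha (mem_powerset.1 hR), mul_assoc]

lemma prob_mem_and_erase (ha : a ∈ X) (B : Finset α → Prop) :
    prob X p (fun S => a ∈ S ∧ B (S.erase a)) = p * prob (X.erase a) p B := by
  have haR : ∀ R ⊆ X.erase a, a ∉ R := fun R hR h => notMem_erase a X (hR h)
  have h₀ : prob (X.erase a) p (fun R => a ∈ R ∧ B (R.erase a)) = 0 :=
    prob_eq_zero fun R hR h => haR R hR h.1
  have h₁ : prob (X.erase a) p (fun R => a ∈ insert a R ∧ B ((insert a R).erase a)) =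
      prob (X.erase a) p B :=
    prob_congr fun R hR => by simp [erase_insert (haR R hR)]
  rw [prob_eq_add_of_mem ha, h₀, h₁]
  ring

lemma prob_not_mem_and (ha : a ∈ X) (B : Finset α → Prop) :
    prob X p (fun S => a ∉ S ∧ B S) = (1 - p) * prob (X.erase a) p B := by
  have haR : ∀ R ⊆ X.erase a, a ∉ R := fun R hR h => notMem_erase a X (hR h)
  have h₀ : prob (X.erase a) p (fun R => a ∉ R ∧ B R) = prob (X.erase a) p B :=
    prob_congr fun R hR => by simp [haR R hR]
  have h₁ : prob (X.erase a) p (fun R => a ∉ insert a R ∧ B (insert a R)) = 0 :=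
    prob_eq_zero fun R _ h => h.1 (mem_insert_self a R)
  rw [prob_eq_add_of_mem ha, h₀, h₁]
  ring

lemma prob_mem_le (hp₀ : 0 ≤ p) (a : α) : prob X p (a ∈ ·) ≤ p := by
  by_cases ha : a ∈ X
  · simpa using (prob_mem_and_erase (p := p) ha (fun _ => True)).le
  · rw [prob_eq_zero fun S hS h => ha (hS h)]
    exact hp₀

lemma prob_mem_and_mem_le (hp₀ : 0 ≤ p) {b : α} (hab : a ≠ b) :
    prob X p (fun S => a ∈ S ∧ b ∈ S) ≤ p ^ 2 := by
  by_cases ha : a ∈ X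
  · rw [prob_congr (C := fun S => a ∈ S ∧ b ∈ S.erase a) fun S _ => by simp [hab.symm],
      prob_mem_and_erase ha (b ∈ ·), sq]
    exact mul_le_mul_of_nonneg_left (prob_mem_le hp₀ b) hp₀
  · rw [prob_eq_zero fun S hS h => ha (hS h.1)]
    positivity

lemma prob_disjoint {A : Finset α} (hA : A ⊆ X) :
    prob X p (fun S => Disjoint S A) = (1 - p) ^ #A := by
  induction A using Finset.induction_on generalizing X with
  | empty => simp
  | insert a A haA ih =>
    have ha : a ∈ X := hA (mem_insert_self a A)
    have hA' : A ⊆ X.erase a := fun b hb =>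
      mem_erase.2 ⟨fun h => haA (h ▸ hb), hA (mem_insert_of_mem hb)⟩
    rw [prob_congr (C := fun S => a ∉ S ∧ Disjoint S A)
        fun S _ => by simp [disjoint_insert_right],
      prob_not_mem_and ha, ih hA', card_insert_of_notMem haA, pow_succ']

lemma prob_not_disjoint {A : Finset α} (hA : A ⊆ X) :
    prob X p (fun S => ¬ Disjoint S A) = 1 - (1 - p) ^ #A := by
  rw [← prob_disjoint hA, ← prob_true (X := X) (p := p), ← prob_and_add_prob_and_not
    (B := fun _ => True) (C := fun S => Disjoint S A)]
  simp

end Split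

lemma weight_disjSum {β : Type*} {Y : Finset β} {S : Finset α} {T : Finset β} (hS : S ⊆ X)
    (hT : T ⊆ Y) : weight (X.disjSum Y) p (S.disjSum T) = weight X p S * weight Y p T := by
  have : #X + #Y - (#S + #T) = (#X - #S) + (#Y - #T) := by
    have := card_le_card hS; have := card_le_card hT; omega
  rw [weight, weight, weight, card_disjSum, card_disjSum, this, pow_add, pow_add]
  ring

lemma prob_exists_inl_inr_mem_le [DecidableEq α] {β : Type*} [DecidableEq β]
    {W : Finset (α ⊕ β)} (hp₀ : 0 ≤ p) (hp₁ : p ≤ 1) (L : Finset (α × β)) :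
    prob W p (fun V => ∃ q ∈ L, .inl q.1 ∈ V ∧ .inr q.2 ∈ V) ≤ #L * p ^ 2 :=
  calc prob W p (fun V => ∃ q ∈ L, .inl q.1 ∈ V ∧ .inr q.2 ∈ V)
      ≤ ∑ q ∈ L, prob W p (fun V => .inl q.1 ∈ V ∧ .inr q.2 ∈ V) :=
        prob_exists_le_sum hp₀ hp₁ L _
    _ ≤ ∑ _q ∈ L, p ^ 2 := sum_le_sum fun q _ => prob_mem_and_mem_le hp₀ Sum.inl_ne_inr
    _ = #L * p ^ 2 := by rw [sum_const, nsmul_eq_mul]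

end Subsample

open Subsample

lemma pairPr_eq_prob_disjSum {α β : Type} [DecidableEq α] [DecidableEq β]
    (X : Finset α) (Y : Finset β) (z : ℝ) (E : Finset α → Finset β → Prop) :
    pairPr X Y z E = prob (X.disjSum Y) (1 / z) (fun U => E U.toLeft U.toRight) := by
  classical
  rw [pairPr, prob, ← sum_product']
  refine sum_equiv sumEquiv.symm.toEquiv (fun ST => ?_) fun ST hST => ?_
  · simp [subset_disjSum]
  · obtain ⟨S, T⟩ := ST
    obtain ⟨hS, hT⟩ := mem_product.1 hST
    change _ = weight (X.disjSum Y) (1 / z) (S.disjSum T) *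
      if E (S.disjSum T).toLeft (S.disjSum T).toRight then 1 else 0
    rw [weight_disjSum (mem_powerset.1 hS) (mem_powerset.1 hT), toLeft_disjSum, toRight_disjSum]
    rfl

lemma one_sub_pow_le_exp_neg_mul {p : ℝ} (hp : p ≤ 1) (n : ℕ) :
    (1 - p) ^ n ≤ Real.exp (-(n * p)) :=
  calc (1 - p) ^ n ≤ Real.exp (-p) ^ n :=
        pow_le_pow_left₀ (sub_nonneg.2 hp) (Real.one_sub_le_exp_neg p) n
    _ = Real.exp (-(n * p)) := by rw [← Real.exp_nat_mul]; ring_nf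

lemma exp_neg_half_le : Real.exp (-(1 / 2)) ≤ 0.65 := by
  have h := Real.quadratic_le_exp_of_nonneg (x := 1 / 2) (by norm_num)
  rw [Real.exp_neg]
  exact inv_le_of_inv_le₀ (by norm_num) (by linarith)

lemma le_prob_not_disjoint {α : Type*} [DecidableEq α] {X A : Finset α} {z : ℝ} (hz : 1 ≤ z)
    (hA : A ⊆ X) (hcard : 0.5 * z < #A) : 0.35 ≤ prob X (1 / z) (fun S => ¬ Disjoint S A) := by
  have hexp : Real.exp (-(#A * (1 / z))) ≤ Real.exp (-(1 / 2)) := by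
    rw [Real.exp_le_exp, neg_le_neg_iff, mul_one_div, le_div_iff₀ (by linarith)]
    linarith
  rw [prob_not_disjoint hA]
  linarith [one_sub_pow_le_exp_neg_mul (div_le_one_of_le₀ hz (by linarith)) #A, exp_neg_half_le]

lemma pairPr_detection_eq {α β : Type} [DecidableEq α] [DecidableEq β] (X : Finset α)
    (Y : Finset β) (z : ℝ) (L' L'' : Finset (α × β)) {x : α} (hx : x ∈ X) :
    pairPr X Y z (fun S T => x ∈ S ∧ (∃ y ∈ T, (x, y) ∈ L') ∧
      (L''.filter fun p => p.1 ∈ S.erase x ∧ p.2 ∈ T) = ∅) =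
    1 / z * prob ((X.disjSum Y).erase (.inl x)) (1 / z) (fun V =>
      ¬ Disjoint V ((L'.filter (·.1 = x)).image (.inr ·.2)) ∧
      ¬ ∃ q ∈ L'', .inl q.1 ∈ V ∧ .inr q.2 ∈ V) := by
  rw [pairPr_eq_prob_disjSum, ← prob_mem_and_erase (inl_mem_disjSum.2 hx)]
  exact prob_congr fun U _ => by simp [not_disjoint_iff, filter_eq_empty_iff]

/-- for a heavy vertex `x` (with `deg_{L'}(x) > 0.5·z`), with probability at
least `0.25/z` we have `x ∈ X'`, the `L'`-neighborhood of `x` meets `Y'`, and no pair of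
`L''` avoiding `x` survives in `(X' ∖ {x}) × Y'`. -/
theorem heavy_vertex_detected :
    ∃ z₀ : ℝ, ∀ z : ℝ, z₀ ≤ z →
    ∀ (α β : Type) (_ : DecidableEq α) (_ : DecidableEq β)
      (X : Finset α) (Y : Finset β) (L' L'' : Finset (α × β)),
      L' ⊆ L'' → L'' ⊆ X ×ˢ Y →
      (L''.card : ℝ) ≤ 0.1 * z ^ 2 →
      ∀ x ∈ X, 0.5 * z < ((L'.filter fun p => p.1 = x).card : ℝ) →
        0.25 / z ≤ pairPr X Y z (fun S T =>
          x ∈ S ∧ (∃ y ∈ T, (x, y) ∈ L') ∧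
            (L''.filter fun p => p.1 ∈ S.erase x ∧ p.2 ∈ T) = ∅) := by
  refine ⟨1, fun z hz α β _ _ X Y L' L'' hL' hL'' hcard x hx hdeg => ?_⟩
  have hp₀ : 0 ≤ 1 / z := by positivity
  have hp₁ : 1 / z ≤ 1 := div_le_one_of_le₀ hz (by linarith)
  set A := (L'.filter (·.1 = x)).image (.inr ·.2 : α × β → α ⊕ β)
  set W := (X.disjSum Y).erase (.inl x)
  have hA : A ⊆ W := by
    intro u hu
    obtain ⟨q, hq, rfl⟩ := mem_image.1 hu
    simpa [W] using (mem_product.1 (hL'' (hL' (mem_filter.1 hq).1))).2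
  have hcardA : #A = #(L'.filter (·.1 = x)) := card_image_of_injOn fun q hq r hr hqr => by
    simp_all [Prod.ext_iff]
  have hhit := le_prob_not_disjoint hz hA (hcardA ▸ hdeg)
  have hbad := (prob_exists_inl_inr_mem_le (W := W) hp₀ hp₁ L'').trans
    (mul_le_mul_of_nonneg_right hcard (sq_nonneg (1 / z)))
  have hsub := prob_sub_prob_le_prob_and_not (X := W) hp₀ hp₁
    (B := fun V => ¬ Disjoint V A) (C := fun V => ∃ q ∈ L'', .inl q.1 ∈ V ∧ .inr q.2 ∈ V)
  rw [pairPr_detection_eq X Y z L' L'' hx, div_eq_mul_one_div, mul_comm]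
  have hz2 : 0.1 * z ^ 2 * (1 / z) ^ 2 = 0.1 := by field_simp
  exact mul_le_mul_of_nonneg_left (by linarith) hp₀
end

section
/- Let z ≥ 1 be real, let X and Y be finite sets, let L ⊆ X×Y with |L| ≤ 0.1·z², and let X' ⊆ X and Y' ⊆ Y be independent 1/z-subsamples. Then the number of vertices u ∈ X ∪ Y such that Pr[u is incident to some pair of L ∩ (X'×Y')] > 0.01/z is at most 20·z. (A vertex u ∈ X is incident to a pair (a,b) if u = a, and u ∈ Y is incident to (a,b) if u = b.) -/
open Finset

/-!
A fixed pair of `L` survives with probability `1/z²`, so by the union bound a vertex of degree `d`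
in `L` is incident to a surviving pair with probability at most `d/z²`. A vertex whose probability
exceeds `0.01/z` therefore has degree at least `0.01·z`; as the degrees on either side sum to at
most `|L| ≤ 0.1·z²`, each side has at most `10·z` such vertices.
-/

open Classical

section Subsample

variable {α β : Type}

noncomputable def subsampleWeight (s : Finset α) (z : ℝ) (S : Finset α) : ℝ :=
  (1 / z) ^ #S * (1 - 1 / z) ^ (#s - #S)

/-- `Pr[P s']` for a `1/z`-subsample `s'` of `s`. -/
noncomputable def subsamplePr (s : Finset α) (z : ℝ) (P : Finset α → Prop) : ℝ :=
  ∑ S ∈ s.powerset, subsampleWeight s z S * if P S then 1 else 0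

theorem subsampleWeight_nonneg {z : ℝ} (hz : 1 ≤ z) (s S : Finset α) :
    0 ≤ subsampleWeight s z S := by
  have : 1 / z ≤ 1 := (div_le_one (by linarith)).mpr hz
  have : 0 ≤ 1 - 1 / z := by linarith
  unfold subsampleWeight
  positivity

theorem sum_subsampleWeight (s : Finset α) (z : ℝ) :
    ∑ S ∈ s.powerset, subsampleWeight s z S = 1 := by
  simp only [subsampleWeight, sum_pow_mul_eq_add_pow, add_sub_cancel, one_pow]

theorem subsampleWeight_insert [DecidableEq α] {s S : Finset α} {a : α} (ha : a ∉ s)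
    (hS : S ⊆ s) (z : ℝ) :
    subsampleWeight (insert a s) z (insert a S) = 1 / z * subsampleWeight s z S := by
  rw [subsampleWeight, subsampleWeight, card_insert_of_notMem ha,
    card_insert_of_notMem fun h => ha (hS h), Nat.add_sub_add_right, pow_succ]
  ring

theorem subsamplePr_mem [DecidableEq α] {s : Finset α} {a : α} (ha : a ∈ s) (z : ℝ) :
    subsamplePr s z (a ∈ ·) = 1 / z := by
  have ha' : a ∉ s.erase a := notMem_erase a s
  rw [subsamplePr, ← insert_erase ha, sum_powerset_insert ha', sum_eq_zero, zero_add]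
  · rw [sum_congr rfl fun S hS => by
      rw [subsampleWeight_insert ha' (mem_powerset.mp hS), if_pos (mem_insert_self a S), mul_one],
      ← mul_sum, sum_subsampleWeight, mul_one]
  · intro S hS
    simp [show a ∉ S from fun h => ha' (mem_powerset.mp hS h)]

theorem subsamplePr_mem_of_notMem {s : Finset α} {a : α} (ha : a ∉ s) (z : ℝ) :
    subsamplePr s z (a ∈ ·) = 0 :=
  sum_eq_zero fun S hS => by simp [show a ∉ S from fun h => ha (mem_powerset.mp hS h)]

variable [DecidableEq α] [DecidableEq β]

theorem pairPr_and (X : Finset α) (Y : Finset β) (z : ℝ) (P : Finset α → Prop)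
    (Q : Finset β → Prop) :
    pairPr X Y z (fun S T => P S ∧ Q T) = subsamplePr X z P * subsamplePr Y z Q := by
  rw [pairPr, subsamplePr, subsamplePr, sum_mul_sum]
  refine sum_congr rfl fun S _ => sum_congr rfl fun T _ => ?_
  by_cases hP : P S <;> by_cases hQ : Q T <;> simp [hP, hQ, subsampleWeight]

theorem pairPr_mem_and_mem_le (X : Finset α) (Y : Finset β) (z : ℝ) (a : α) (b : β) :
    pairPr X Y z (fun S T => a ∈ S ∧ b ∈ T) ≤ 1 / z ^ 2 := by
  rw [pairPr_and]
  by_cases ha : a ∈ X <;> by_cases hb : b ∈ Y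
  · rw [subsamplePr_mem ha, subsamplePr_mem hb]; exact le_of_eq (by ring)
  all_goals simp [subsamplePr_mem_of_notMem, *]; positivity

theorem pairPr_le_sum {z : ℝ} (hz : 1 ≤ z) (X : Finset α) (Y : Finset β) {ι : Type*}
    (I : Finset ι) {E : Finset α → Finset β → Prop}
    {Q : ι → Finset α → Finset β → Prop}
    (hE : ∀ S T, E S T → ∃ i ∈ I, Q i S T) :
    pairPr X Y z E ≤ ∑ i ∈ I, pairPr X Y z (Q i) := by
  simp only [pairPr]
  rw [sum_comm (s := I)]
  refine sum_le_sum fun S _ => ?_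
  rw [sum_comm (s := I)]
  refine sum_le_sum fun T _ => ?_
  rw [← mul_sum]
  have hw := mul_nonneg (subsampleWeight_nonneg hz X S) (subsampleWeight_nonneg hz Y T)
  refine mul_le_mul_of_nonneg_left ?_ hw
  have hQ : ∀ i ∈ I, (0 : ℝ) ≤ if Q i S T then 1 else 0 := fun i _ => by
    split_ifs <;> norm_num
  by_cases hST : E S T
  · obtain ⟨i, hi, hQi⟩ := hE S T hST
    rw [if_pos hST]
    exact (if_pos hQi).symm.le.trans (single_le_sum hQ hi)
  · rw [if_neg hST]
    exact sum_nonneg hQ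

theorem pairPr_incident_le {γ : Type*} {z : ℝ} (hz : 1 ≤ z) (X : Finset α) (Y : Finset β)
    (L : Finset (α × β)) (f : α × β → γ) (u : γ) :
    pairPr X Y z (fun S T => ∃ p ∈ L, f p = u ∧ p.1 ∈ S ∧ p.2 ∈ T) ≤
      #{p ∈ L | f p = u} / z ^ 2 :=
  calc _ ≤ ∑ p ∈ L with f p = u, pairPr X Y z (fun S T => p.1 ∈ S ∧ p.2 ∈ T) :=
        pairPr_le_sum hz X Y _ fun _ _ ⟨p, hpL, hpu, hpS, hpT⟩ =>
          ⟨p, mem_filter.mpr ⟨hpL, hpu⟩, hpS, hpT⟩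
    _ ≤ ∑ p ∈ L with f p = u, 1 / z ^ 2 :=
        sum_le_sum fun p _ => pairPr_mem_and_mem_le X Y z p.1 p.2
    _ = _ := by rw [sum_const, nsmul_eq_mul, mul_one_div]

end Subsample

theorem card_mul_le_card_of_le_card_fiber {ι γ : Type*} (f : ι → γ) (L : Finset ι)
    (A : Finset γ) {c : ℝ} (h : ∀ u ∈ A, c ≤ #{p ∈ L | f p = u}) : #A * c ≤ #L := by
  have hfib : ∑ u ∈ A, #{p ∈ L | f p = u} ≤ #L := by
    simpa using sum_fiberwise_le_sum_of_sum_fiber_nonneg (s := L) (t := A) (g := f)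
      (f := fun _ => (1 : ℕ)) fun _ _ => Nat.zero_le _
  calc #A * c = ∑ u ∈ A, c := by rw [sum_const, nsmul_eq_mul]
    _ ≤ ∑ u ∈ A, (#{p ∈ L | f p = u} : ℝ) := sum_le_sum h
    _ ≤ #L := mod_cast hfib

theorem card_frequent_le {α β γ : Type} [DecidableEq α] [DecidableEq β] {z δ κ : ℝ}
    (hz : 1 ≤ z) (hδ : 0 < δ) (X : Finset α) (Y : Finset β) (L : Finset (α × β))
    (hcard : (#L : ℝ) ≤ κ * z ^ 2) (f : α × β → γ) (V : Finset γ) :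
    (#{u ∈ V | δ / z < pairPr X Y z fun S T => ∃ p ∈ L, f p = u ∧ p.1 ∈ S ∧ p.2 ∈ T} :
      ℝ) ≤ κ / δ * z := by
  have hz0 : 0 < z := by linarith
  refine le_of_mul_le_mul_right ?_ (mul_pos hδ hz0)
  calc _ ≤ (#L : ℝ) := card_mul_le_card_of_le_card_fiber f L _ fun u hu => ?_
    _ ≤ κ * z ^ 2 := hcard
    _ = κ / δ * z * (δ * z) := by field_simp
  have hlt := (mem_filter.mp hu).2.trans_le (pairPr_incident_le hz X Y L f u)
  rw [lt_div_iff₀ (by positivity), show δ / z * z ^ 2 = δ * z by field_simp] at hlt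
  exact hlt.le

open Classical in
theorem few_frequent_vertices_general (z : ℝ) (hz : 1 ≤ z)
    (α β : Type) [DecidableEq α] [DecidableEq β]
    (X : Finset α) (Y : Finset β) (L : Finset (α × β))
    (hcard : (L.card : ℝ) ≤ 0.1 * z ^ 2) :
    (((X.filter fun x =>
          0.01 / z < pairPr X Y z fun S T => ∃ p ∈ L, p.1 = x ∧ p.1 ∈ S ∧ p.2 ∈ T).card
      + (Y.filter fun y =>
          0.01 / z < pairPr X Y z fun S T => ∃ p ∈ L, p.2 = y ∧ p.1 ∈ S ∧ p.2 ∈ T).card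
      : ℕ) : ℝ) ≤ 20 * z := by
  have hδ : (0 : ℝ) < 0.01 := by norm_num
  have hX := card_frequent_le hz hδ X Y L hcard Prod.fst X
  have hY := card_frequent_le hz hδ X Y L hcard Prod.snd Y
  push_cast
  norm_num at hX hY ⊢
  linarith

open Classical in
/-- at most `20·z` vertices of `X ∪ Y` are incident to a surviving pair of
`L ∩ (X' × Y')` with probability greater than `0.01/z`. -/
theorem few_frequent_vertices (z : ℝ) (hz : 1 ≤ z)
    (α β : Type) [DecidableEq α] [DecidableEq β]
    (X : Finset α) (Y : Finset β) (L : Finset (α × β)) (hL : L ⊆ X ×ˢ Y)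
    (hcard : (L.card : ℝ) ≤ 0.1 * z ^ 2) :
    (((X.filter fun x =>
          0.01 / z < pairPr X Y z fun S T => ∃ p ∈ L, p.1 = x ∧ p.1 ∈ S ∧ p.2 ∈ T).card
      + (Y.filter fun y =>
          0.01 / z < pairPr X Y z fun S T => ∃ p ∈ L, p.2 = y ∧ p.1 ∈ S ∧ p.2 ∈ T).card
      : ℕ) : ℝ) ≤ 20 * z :=
  few_frequent_vertices_general z hz α β X Y L hcard
end

section
/- There exist absolute constants C, c > 0 such that the following holds for every integer n ≥ 3. Let x₁,…,xₙ be distinct points in ℝ^d and let g ∈ ℝ^d be a standard Gaussian vector (g ∼ N(0, I_d)). Then with probability at least 1 − C/log n over g, every pair i ≠ j satisfies ‖xᵢ − xⱼ‖₂/(n²·log n) ≤ |⟨g, xᵢ − xⱼ⟩| ≤ C·√(log n)·‖xᵢ − xⱼ‖₂. -/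
/-!
For a fixed `v ≠ 0`, `⟪v, g⟫ / ‖v‖` is a standard normal variable. Its density is bounded by
`1 / √(2π) < 1 / 2`, so it is smaller than `a` in absolute value with probability at most `a`, and
its sub-Gaussian tail exceeds `b` with probability at most `2 exp (-b² / 2)`. Taking
`a = 1 / (n² log n)` and `b = 3 √(log n)`, a union bound over fewer than `n²` pairs loses at most
`1 / log n + 2 n² n^(-9/2) ≤ 3 / log n`.
-/

open Finset MeasureTheory ProbabilityTheory Real
open scoped NNReal RealInnerProductSpace

lemma gaussianPDFReal_le (μ : ℝ) (v : ℝ≥0) (x : ℝ) :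
    gaussianPDFReal μ v x ≤ (√(2 * π * v))⁻¹ := by
  rw [gaussianPDFReal]
  refine mul_le_of_le_one_right (by positivity) (exp_le_one_iff.2 ?_)
  exact div_nonpos_of_nonpos_of_nonneg (neg_nonpos.2 (sq_nonneg _)) (by positivity)

lemma gaussianReal_le_ofReal_mul_volume (μ : ℝ) {v : ℝ≥0} (hv : v ≠ 0) (s : Set ℝ) :
    gaussianReal μ v s ≤ ENNReal.ofReal (√(2 * π * v))⁻¹ * volume s := by
  rw [gaussianReal_apply μ hv, ← setLIntegral_const]
  exact lintegral_mono fun x => ENNReal.ofReal_le_ofReal (gaussianPDFReal_le μ v x)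

lemma gaussianReal_real_abs_lt_le {a : ℝ} (ha : 0 ≤ a) :
    (gaussianReal 0 1).real {y | |y| < a} ≤ a := by
  have h2π : 2 ≤ √(2 * π * (1 : ℝ≥0)) :=
    (le_sqrt zero_le_two (by positivity)).2 (by push_cast; nlinarith [pi_gt_three])
  refine ENNReal.toReal_le_of_le_ofReal ha ?_
  calc gaussianReal 0 1 {y | |y| < a}
      ≤ gaussianReal 0 1 (Set.Icc (-a) a) := measure_mono fun y hy => abs_le.1 hy.le
    _ ≤ ENNReal.ofReal (√(2 * π * (1 : ℝ≥0)))⁻¹ * volume (Set.Icc (-a) a) :=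
        gaussianReal_le_ofReal_mul_volume 0 one_ne_zero _
    _ = ENNReal.ofReal ((√(2 * π * (1 : ℝ≥0)))⁻¹ * (2 * a)) := by
        rw [Real.volume_Icc, ← ENNReal.ofReal_mul (by positivity)]
        ring_nf
    _ ≤ ENNReal.ofReal a := by
        refine ENNReal.ofReal_le_ofReal ((inv_mul_le_iff₀ (by positivity)).2 ?_)
        nlinarith

lemma hasSubgaussianMGF_id_gaussianReal (v : ℝ≥0) :
    HasSubgaussianMGF id v (gaussianReal 0 v) where
  integrable_exp_mul := integrable_exp_mul_gaussianReal
  mgf_le t := by simp [mgf_id_gaussianReal]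

lemma gaussianReal_real_lt_abs_le {b : ℝ} (hb : 0 ≤ b) :
    (gaussianReal 0 1).real {y | b < |y|} ≤ 2 * exp (-b ^ 2 / 2) := by
  have h := hasSubgaussianMGF_id_gaussianReal 1
  have hsub : {y : ℝ | b < |y|} ⊆ {y | b ≤ id y} ∪ {y | b ≤ (-id) y} := by
    intro y (hy : b < |y|)
    rcases le_abs'.1 hy.le with h | h
    · exact Or.inr (show b ≤ -y by linarith)
    · exact Or.inl h
  calc (gaussianReal 0 1).real {y | b < |y|}
      ≤ (gaussianReal 0 1).real {y | b ≤ id y} + (gaussianReal 0 1).real {y | b ≤ (-id) y} :=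
        (measureReal_mono hsub).trans (measureReal_union_le _ _)
    _ ≤ exp (-b ^ 2 / (2 * (1 : ℝ≥0))) + exp (-b ^ 2 / (2 * (1 : ℝ≥0))) :=
        add_le_add (h.measure_ge_le hb) (h.neg.measure_ge_le hb)
    _ = 2 * exp (-b ^ 2 / 2) := by rw [NNReal.coe_one, mul_one, two_mul]

section StdGaussian

variable {E : Type*} [NormedAddCommGroup E] [InnerProductSpace ℝ E] [FiniteDimensional ℝ E]
  [MeasurableSpace E] [BorelSpace E]

lemma stdGaussian_map_innerSL (v : E) :
    (stdGaussian E).map (innerSL ℝ v) = gaussianReal 0 (‖v‖₊ ^ 2) := by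
  rw [IsGaussian.map_eq_gaussianReal, integral_strongDual_stdGaussian, variance_dual_stdGaussian,
    innerSL_apply_norm]
  congr 1
  ext
  simp

lemma stdGaussian_real_abs_inner_notMem_Icc_le (v : E) (hv : v ≠ 0) {a b : ℝ} (ha : 0 ≤ a)
    (hb : 0 ≤ b) :
    (stdGaussian E).real {g | |⟪v, g⟫| ∉ Set.Icc (a * ‖v‖) (b * ‖v‖)} ≤
      a + 2 * exp (-b ^ 2 / 2) := by
  have hv₀ : 0 < ‖v‖ := norm_pos_iff.2 hv
  set u := ‖v‖⁻¹ • v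
  have hu : ‖u‖₊ = 1 := by ext; exact norm_smul_inv_norm hv
  have hset : {g | |⟪v, g⟫| ∉ Set.Icc (a * ‖v‖) (b * ‖v‖)} =
      innerSL ℝ u ⁻¹' ({y | |y| < a} ∪ {y | b < |y|}) := by
    ext g
    simp only [Set.mem_ofPred_eq, Set.mem_Icc, Set.mem_preimage, Set.mem_union,
      innerSL_apply_apply, u, real_inner_smul_left, abs_mul, abs_inv, abs_norm, not_and_or, not_le,
      inv_mul_lt_iff₀ hv₀, lt_inv_mul_iff₀ hv₀, mul_comm ‖v‖]
  rw [hset, ← map_measureReal_apply (innerSL ℝ u).continuous.measurable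
    ((isOpen_lt continuous_abs continuous_const).union
      (isOpen_lt continuous_const continuous_abs)).measurableSet,
    stdGaussian_map_innerSL, hu, one_pow]
  exact (measureReal_union_le _ _).trans
    (add_le_add (gaussianReal_real_abs_lt_le ha) (gaussianReal_real_lt_abs_le hb))

lemma one_sub_le_stdGaussian_real_pairwise_abs_inner_mem_Icc {ι : Type*} [Fintype ι]
    {y : ι → E} (hy : Function.Injective y) {a b : ℝ} (ha : 0 ≤ a) (hb : 0 ≤ b) :
    1 - Fintype.card ι ^ 2 * (a + 2 * exp (-b ^ 2 / 2)) ≤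
      (stdGaussian E).real
        {g | ∀ i j, i ≠ j → |⟪y i - y j, g⟫| ∈ Set.Icc (a * ‖y i - y j‖) (b * ‖y i - y j‖)} := by
  set S := {g | ∀ i j, i ≠ j → |⟪y i - y j, g⟫| ∈ Set.Icc (a * ‖y i - y j‖) (b * ‖y i - y j‖)}
  set B := a + 2 * exp (-b ^ 2 / 2)
  have hcompl : Sᶜ ⊆ ⋃ p ∈ (univ : Finset ι).offDiag,
      {g | |⟪y p.1 - y p.2, g⟫| ∉ Set.Icc (a * ‖y p.1 - y p.2‖) (b * ‖y p.1 - y p.2‖)} := by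
    intro g hg
    simp only [S, Set.mem_compl_iff, Set.mem_ofPred_eq, not_forall] at hg
    obtain ⟨i, j, hij, hbad⟩ := hg
    exact Set.mem_biUnion (x := (i, j)) (by simpa using hij) hbad
  have hbad : (stdGaussian E).real Sᶜ ≤ Fintype.card ι ^ 2 * B := calc
    (stdGaussian E).real Sᶜ ≤ ∑ p ∈ (univ : Finset ι).offDiag, B :=
      (measureReal_mono hcompl (measure_ne_top _ _)).trans <|
        (measureReal_biUnion_finset_le _ _).trans <|
        sum_le_sum fun p hp => stdGaussian_real_abs_inner_notMem_Icc_le _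
          (sub_ne_zero.2 (hy.ne (mem_offDiag.1 hp).2.2)) ha hb
    _ ≤ Fintype.card ι ^ 2 * B := by
      rw [sum_const, nsmul_eq_mul]
      gcongr
      rw [offDiag_card, card_univ, sq]
      exact_mod_cast Nat.sub_le _ _
  have hunion : 1 ≤ (stdGaussian E).real S + (stdGaussian E).real Sᶜ := by
    simpa using measureReal_union_le (μ := stdGaussian E) S Sᶜ
  linarith

end StdGaussian

lemma sq_mul_add_two_mul_exp_le_three_div_log {n : ℝ} (hn : 1 < n) :
    n ^ 2 * (1 / (n ^ 2 * log n) + 2 * exp (-(3 * √(log n)) ^ 2 / 2)) ≤ 3 / log n := by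
  have hL : 0 < log n := log_pos hn
  have hn₂ : n ^ 2 = exp (2 * log n) := by
    rw [← log_rpow (by linarith), exp_log (by positivity)]
    norm_cast
  have hexp : n ^ 2 * exp (-(3 * √(log n)) ^ 2 / 2) ≤ 1 / log n := by
    rw [hn₂, ← exp_add, mul_pow, sq_sqrt hL.le, le_div_iff₀ hL,
      show 2 * log n + -(3 ^ 2 * log n) / 2 = -(5 / 2 * log n) by ring, exp_neg,
      inv_mul_le_iff₀ (exp_pos _)]
    nlinarith [add_one_le_exp (5 / 2 * log n)]
  calc n ^ 2 * (1 / (n ^ 2 * log n) + 2 * exp (-(3 * √(log n)) ^ 2 / 2))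
      = 1 / log n + 2 * (n ^ 2 * exp (-(3 * √(log n)) ^ 2 / 2)) := by
        field_simp
    _ ≤ 1 / log n + 2 * (1 / log n) := by gcongr
    _ = 3 / log n := by ring

/-- for a standard Gaussian `g ∼ N(0, I_d)`, with probability at least
`1 − C/log n`, every pair of distinct points satisfies
`‖xᵢ − xⱼ‖₂/(n²·log n) ≤ |⟨g, xᵢ − xⱼ⟩| ≤ C·√(log n)·‖xᵢ − xⱼ‖₂`. -/
theorem gaussian_projection_bilipschitz :
    ∃ C c : ℝ, 0 < C ∧ 0 < c ∧
    ∀ (n : ℕ), 3 ≤ n →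
    ∀ (d : ℕ) (x : Fin n → Fin d → ℝ), Function.Injective x →
    ENNReal.ofReal (1 - C / Real.log n) ≤
      (Measure.pi fun _ : Fin d => gaussianReal 0 1)
        {g : Fin d → ℝ | ∀ i j : Fin n, i ≠ j →
          Real.sqrt (∑ k, (x i k - x j k) ^ 2) / ((n : ℝ) ^ 2 * Real.log n) ≤
              |∑ k, g k * (x i k - x j k)| ∧
            |∑ k, g k * (x i k - x j k)| ≤
              C * Real.sqrt (Real.log n) * Real.sqrt (∑ k, (x i k - x j k) ^ 2)} := by
  refine ⟨3, 1, three_pos, one_pos, fun n hn d x hx => ?_⟩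
  have hn₁ : (1 : ℝ) < n := by exact_mod_cast (by omega : 1 < n)
  set y : Fin n → EuclideanSpace ℝ (Fin d) := fun i => WithLp.toLp 2 (x i)
  have hset : {g : Fin d → ℝ | ∀ i j : Fin n, i ≠ j →
          Real.sqrt (∑ k, (x i k - x j k) ^ 2) / ((n : ℝ) ^ 2 * Real.log n) ≤
              |∑ k, g k * (x i k - x j k)| ∧
            |∑ k, g k * (x i k - x j k)| ≤
              3 * Real.sqrt (Real.log n) * Real.sqrt (∑ k, (x i k - x j k) ^ 2)} =
      WithLp.toLp 2 ⁻¹' {g | ∀ i j, i ≠ j →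
        |⟪y i - y j, g⟫| ∈
          Set.Icc (1 / (n ^ 2 * log n) * ‖y i - y j‖) (3 * √(log n) * ‖y i - y j‖)} := by
    ext g
    simp [y, EuclideanSpace.norm_eq, PiLp.inner_apply, mul_comm, div_eq_inv_mul]
  rw [hset, ← MeasurableEquiv.coe_toLp, ← MeasurableEquiv.map_apply, MeasurableEquiv.coe_toLp,
    map_pi_eq_stdGaussian, ← ofReal_measureReal]
  refine ENNReal.ofReal_le_ofReal (le_trans ?_
    (one_sub_le_stdGaussian_real_pairwise_abs_inner_mem_Icc ((WithLp.toLp_injective 2).comp hx)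
      (by positivity) (by positivity)))
  simp only [Fintype.card_fin]
  linarith [sq_mul_add_two_mul_exp_le_three_div_log hn₁]
end

section
/- There is an absolute constant C such that the following holds for every integer n ≥ 1. Let a, b : [n] → [n] be nondecreasing functions and let Q = {(i,j) ∈ [n]×[n] : a(i) ≤ j ≤ b(i)}. Let s = ⌊n^{1/4}⌋. Then there exist an integer L ≥ 0 and subsets I₁,…,I_L ⊆ [n] and J₁,…,J_L ⊆ [n] with |I_ℓ| = |J_ℓ| = s for every ℓ, such that the combinatorial rectangles I₁×J₁, …, I_L×J_L are pairwise disjoint, each is contained in Q, and |Q ∖ ∪_{ℓ=1}^{L} (I_ℓ × J_ℓ)| ≤ C·n^{7/4}. -/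
/-!
Cut `Fin n × Fin n` into the grid of `s × s` cells `{(i, j) : i / s = k, j / s = t}` and take as
tiles the complete cells contained in `Q`. An uncovered point `(i, j)` of `Q` lies in a cell that
sticks out of the grid or contains a point outside `Q`; by monotonicity this forces
`j < a (i + s) + s` or `b (i - s) < j + s`. So row `i` has at most
`(a (i + s) - a i) + (b i - b (i - s)) + 2 s` uncovered points, and these shifted differences
telescope: summed over all rows they are at most `s n` each. Hence at most
`4 s n ≤ 4 n ^ (5 / 4)` points stay uncovered.
-/

open Finset

theorem Monotone.sum_range_tsub_shift_le {g : ℕ → ℕ} (hg : Monotone g) {N : ℕ}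
    (hN : ∀ i, g i ≤ N) (m s : ℕ) : ∑ i ∈ range m, (g (i + s) - g i) ≤ s * N := by
  induction s with
  | zero => simp
  | succ s ih =>
    have hstep : ∑ i ∈ range m, (g (i + 1 + s) - g (i + s)) = g (m + s) - g (0 + s) :=
      sum_range_tsub (f := fun i => g (i + s)) (fun x y hxy => hg (by omega)) m
    calc ∑ i ∈ range m, (g (i + (s + 1)) - g i)
        = ∑ i ∈ range m, ((g (i + 1 + s) - g (i + s)) + (g (i + s) - g i)) :=
          sum_congr rfl fun i _ => by
            rw [tsub_add_tsub_cancel (hg (by omega)) (hg (by omega)), add_right_comm, add_assoc]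
      _ ≤ N + s * N := by
          rw [sum_add_distrib, hstep]
          exact add_le_add ((Nat.sub_le _ _).trans (hN _)) ih
      _ = (s + 1) * N := by ring

theorem Monotone.sum_range_tsub_shift_sub_le {g : ℕ → ℕ} (hg : Monotone g) {N : ℕ}
    (hN : ∀ i, g i ≤ N) (m s : ℕ) : ∑ i ∈ range m, (g i - g (i - s)) ≤ s * N := by
  simpa using (show Monotone fun i => g (i - s) from fun x y hxy => hg (by omega))
    |>.sum_range_tsub_shift_le (fun i => hN (i - s)) m s

theorem Nat.lt_add_of_div_le_div {x y s : ℕ} (hs : 0 < s) (h : x / s ≤ y / s) : x < y + s :=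
  calc x < x / s * s + s := Nat.lt_div_mul_add hs
    _ ≤ y / s * s + s := by gcongr
    _ ≤ y + s := by gcongr; exact Nat.div_mul_le_self y s

theorem Fin.card_filter_val_mem_Ico_le (n lo hi : ℕ) :
    (univ.filter fun j : Fin n => lo ≤ j.val ∧ j.val < hi).card ≤ hi - lo := by
  rw [← Nat.card_Ico]
  exact card_le_card_of_injOn Fin.val (fun j hj => by simpa using hj) Fin.val_injective.injOn

theorem Fin.card_filter_val_mem_Ico_eq {n lo hi : ℕ} (h : hi ≤ n) :
    (univ.filter fun j : Fin n => lo ≤ j.val ∧ j.val < hi).card = hi - lo := by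
  rw [← Nat.card_Ico]
  refine card_nbij Fin.val (fun j hj => by simpa using hj) Fin.val_injective.injOn ?_
  intro m hm
  simp only [coe_Ico, Set.mem_Ico] at hm
  exact ⟨⟨m, by omega⟩, by simpa using hm, rfl⟩

theorem Fin.card_filter_snd_val_mem_Ico_le (n : ℕ) (lo hi : ℕ → ℕ) :
    (univ.filter fun p : Fin n × Fin n => lo p.1 ≤ p.2.val ∧ p.2.val < hi p.1).card ≤
      ∑ i ∈ range n, (hi i - lo i) := by
  have hrows : (univ.filter fun p : Fin n × Fin n => lo p.1 ≤ p.2.val ∧ p.2.val < hi p.1) =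
      univ.biUnion fun i : Fin n =>
        {i} ×ˢ univ.filter fun j : Fin n => lo i ≤ j.val ∧ j.val < hi i := by
    ext p
    simp [Prod.ext_iff, eq_comm]
  rw [hrows, ← Fin.sum_univ_eq_sum_range fun i => hi i - lo i]
  refine card_biUnion_le.trans (sum_le_sum fun i _ => ?_)
  rw [card_product, card_singleton, one_mul]
  exact Fin.card_filter_val_mem_Ico_le n _ _

variable {n : ℕ}

def block (n s k : ℕ) : Finset (Fin n) := univ.filter fun i => i.val / s = k

def cell (n s : ℕ) (c : ℕ × ℕ) : Finset (Fin n × Fin n) := block n s c.1 ×ˢ block n s c.2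

def gridCells (s : ℕ) (Q : Finset (Fin n × Fin n)) : Finset (ℕ × ℕ) :=
  (range (n / s) ×ˢ range (n / s)).filter fun c => cell n s c ⊆ Q

def gridCover (s : ℕ) (Q : Finset (Fin n × Fin n)) : Finset (Fin n × Fin n) :=
  (gridCells s Q).biUnion (cell n s)

@[simp]
theorem mem_block {s k : ℕ} {i : Fin n} : i ∈ block n s k ↔ i.val / s = k := by
  simp [block]

theorem card_block {s k : ℕ} (hk : k < n / s) : (block n s k).card = s := by
  have hs : 0 < s := Nat.pos_of_ne_zero fun h => by simp [h] at hk
  have hkn : k * s + s ≤ n := by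
    rw [← Nat.succ_mul]; exact (Nat.le_div_iff_mul_le hs).mp hk
  have hblock :
      block n s k = univ.filter fun i : Fin n => k * s ≤ i.val ∧ i.val < k * s + s := by
    ext i
    simp only [mem_block, mem_filter, mem_univ, true_and, Nat.div_eq_iff hs]
    omega
  rw [hblock, Fin.card_filter_val_mem_Ico_eq hkn]
  omega

theorem disjoint_block {s k k' : ℕ} (h : k ≠ k') : Disjoint (block n s k) (block n s k') :=
  disjoint_filter.mpr fun _ _ hk hk' => h (hk.symm.trans hk')

theorem disjoint_cell {s : ℕ} {c c' : ℕ × ℕ} (h : c ≠ c') :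
    Disjoint (cell n s c) (cell n s c') := by
  rw [cell, cell, disjoint_product]
  by_cases h1 : c.1 = c'.1
  · exact Or.inr (disjoint_block fun h2 => h (Prod.ext h1 h2))
  · exact Or.inl (disjoint_block h1)

theorem cell_subset_of_mem_gridCells {s : ℕ} {Q : Finset (Fin n × Fin n)} {c : ℕ × ℕ}
    (hc : c ∈ gridCells s Q) : cell n s c ⊆ Q :=
  (mem_filter.mp hc).2

theorem card_block_of_mem_gridCells {s : ℕ} {Q : Finset (Fin n × Fin n)} {c : ℕ × ℕ}
    (hc : c ∈ gridCells s Q) : (block n s c.1).card = s ∧ (block n s c.2).card = s := by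
  simp only [gridCells, mem_filter, mem_product, mem_range] at hc
  exact ⟨card_block hc.1.1, card_block hc.1.2⟩

theorem exists_not_mem_of_mem_sdiff_gridCover {s : ℕ} {Q : Finset (Fin n × Fin n)}
    {p : Fin n × Fin n} (hp : p ∈ Q \ gridCover s Q) :
    n / s ≤ p.1.val / s ∨ n / s ≤ p.2.val / s ∨
      ∃ q ∉ Q, q.1.val / s = p.1.val / s ∧ q.2.val / s = p.2.val / s := by
  by_contra! h
  obtain ⟨h1, h2, hcell⟩ := h
  refine (mem_sdiff.mp hp).2 (mem_biUnion.mpr ⟨(p.1.val / s, p.2.val / s), ?_, ?_⟩)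
  · refine mem_filter.mpr ⟨by simp [h1, h2], fun q hq => ?_⟩
    simp only [cell, mem_product, mem_block] at hq
    by_contra hqQ
    exact hcell q hqQ hq.1 hq.2
  · simp [cell]

section ExtendNat

variable {m : ℕ}

-- Extending by the top value `m` keeps monotonicity, and it puts the rows after the last
-- complete row of cells into the band `j < a (i + s) + s`.
def Fin.extendNat (a : Fin n → Fin m) (k : ℕ) : ℕ := if h : k < n then a ⟨k, h⟩ else m

@[simp]
theorem Fin.extendNat_val (a : Fin n → Fin m) (i : Fin n) : Fin.extendNat a i = a i := by
  simp [Fin.extendNat]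

theorem Fin.extendNat_le (a : Fin n → Fin m) (k : ℕ) : Fin.extendNat a k ≤ m := by
  unfold Fin.extendNat; split <;> omega

theorem Fin.extendNat_of_le {a : Fin n → Fin m} {k : ℕ} (hk : n ≤ k) :
    Fin.extendNat a k = m := by
  simp [Fin.extendNat, Nat.not_lt.mpr hk]

theorem Monotone.fin_extendNat {a : Fin n → Fin m} (ha : Monotone a) :
    Monotone (Fin.extendNat a) := by
  intro k l hkl
  unfold Fin.extendNat
  split_ifs with hk hl hl
  · exact ha (Fin.mk_le_mk.mpr hkl)
  · omega
  · omega
  · rfl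

end ExtendNat

def staircase (a b : Fin n → Fin n) : Finset (Fin n × Fin n) :=
  univ.filter fun p => a p.1 ≤ p.2 ∧ p.2 ≤ b p.1

theorem mem_staircase {a b : Fin n → Fin n} {p : Fin n × Fin n} :
    p ∈ staircase a b ↔ a p.1 ≤ p.2 ∧ p.2 ≤ b p.1 := by
  simp [staircase]

theorem lt_or_lt_of_mem_staircase_sdiff_gridCover {a b : Fin n → Fin n} (ha : Monotone a)
    (hb : Monotone b) {s : ℕ} (hs : 0 < s) {i j : Fin n}
    (hp : (i, j) ∈ staircase a b \ gridCover s (staircase a b)) :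
    j.val < Fin.extendNat a (i + s) + s ∨ Fin.extendNat b (i - s) < j.val + s := by
  have hij := mem_staircase.mp (mem_sdiff.mp hp).1
  have hb_lt : Fin.extendNat b (i - s) < n :=
    (hb.fin_extendNat (Nat.sub_le i s)).trans_lt (by simp)
  rcases exists_not_mem_of_mem_sdiff_gridCover hp with
    hi | hj | ⟨⟨i', j'⟩, hq, hi', hj'⟩ <;> dsimp only at *
  · left
    rw [Fin.extendNat_of_le (Nat.lt_add_of_div_le_div hs hi).le]
    omega
  · right
    have := Nat.lt_add_of_div_le_div hs hj
    omega
  · rw [mem_staircase, not_and_or, not_le, not_le] at hq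
    rcases hq with hq | hq
    · left
      have hjj' := Nat.lt_add_of_div_le_div hs hj'.ge
      have hai' : (a i' : ℕ) ≤ Fin.extendNat a (i + s) := by
        rw [← Fin.extendNat_val]
        exact ha.fin_extendNat (Nat.lt_add_of_div_le_div hs hi'.le).le
      have : j' < a i' := hq
      omega
    · right
      have hjj' := Nat.lt_add_of_div_le_div hs hj'.le
      have hbi' : Fin.extendNat b (i - s) ≤ b i' := by
        rw [← Fin.extendNat_val]
        exact hb.fin_extendNat (by have := Nat.lt_add_of_div_le_div hs hi'.ge; omega)
      have : b i' < j' := hq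
      omega

theorem card_staircase_sdiff_gridCover_le {a b : Fin n → Fin n} (ha : Monotone a)
    (hb : Monotone b) {s : ℕ} (hs : 0 < s) :
    (staircase a b \ gridCover s (staircase a b)).card ≤ 4 * s * n := by
  set A := Fin.extendNat a
  set B := Fin.extendNat b
  have hsub : staircase a b \ gridCover s (staircase a b) ⊆
      (univ.filter fun p : Fin n × Fin n => A p.1 ≤ p.2.val ∧ p.2.val < A (p.1 + s) + s) ∪
      (univ.filter fun p : Fin n × Fin n =>
        B (p.1 - s) + 1 - s ≤ p.2.val ∧ p.2.val < B p.1 + 1) := by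
    rintro ⟨i, j⟩ hp
    have hij := mem_staircase.mp (mem_sdiff.mp hp).1
    have hband := lt_or_lt_of_mem_staircase_sdiff_gridCover ha hb hs hp
    simp only [mem_union, mem_filter, mem_univ, true_and, A, B, Fin.extendNat_val]
    dsimp only at hij
    rw [Fin.le_def, Fin.le_def] at hij
    omega
  have hlower : ∑ i ∈ range n, (A (i + s) + s - A i) ≤ s * n + s * n :=
    calc ∑ i ∈ range n, (A (i + s) + s - A i) ≤ ∑ i ∈ range n, ((A (i + s) - A i) + s) :=
          sum_le_sum fun i _ => by omega
      _ ≤ s * n + s * n := by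
          rw [sum_add_distrib, sum_const, card_range, smul_eq_mul, mul_comm n]
          gcongr
          exact ha.fin_extendNat.sum_range_tsub_shift_le (Fin.extendNat_le a) n s
  have hupper : ∑ i ∈ range n, (B i + 1 - (B (i - s) + 1 - s)) ≤ s * n + s * n :=
    calc ∑ i ∈ range n, (B i + 1 - (B (i - s) + 1 - s))
          ≤ ∑ i ∈ range n, ((B i - B (i - s)) + s) :=
          sum_le_sum fun i _ => by have := hb.fin_extendNat (Nat.sub_le i s); omega
      _ ≤ s * n + s * n := by
          rw [sum_add_distrib, sum_const, card_range, smul_eq_mul, mul_comm n]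
          gcongr
          exact hb.fin_extendNat.sum_range_tsub_shift_sub_le (Fin.extendNat_le b) n s
  calc (staircase a b \ gridCover s (staircase a b)).card
      ≤ ∑ i ∈ range n, (A (i + s) + s - A i) +
          ∑ i ∈ range n, (B i + 1 - (B (i - s) + 1 - s)) :=
        (card_le_card hsub).trans <| (card_union_le _ _).trans <| add_le_add
          (Fin.card_filter_snd_val_mem_Ico_le n A fun i => A (i + s) + s)
          (Fin.card_filter_snd_val_mem_Ico_le n (fun i => B (i - s) + 1 - s) fun i => B i + 1)
    _ ≤ (s * n + s * n) + (s * n + s * n) := add_le_add hlower hupper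
    _ = 4 * s * n := by ring

theorem Finset.biUnion_univ_equivFin_symm {ι β : Type*} [DecidableEq β] (P : Finset ι)
    (F : ι → Finset β) : univ.biUnion (fun l => F (P.equivFin.symm l)) = P.biUnion F := by
  ext x
  simp only [mem_biUnion, mem_univ, true_and]
  constructor
  · rintro ⟨l, hx⟩
    exact ⟨_, (P.equivFin.symm l).2, hx⟩
  · rintro ⟨c, hc, hx⟩
    exact ⟨P.equivFin ⟨c, hc⟩, by simpa using hx⟩

theorem natFloor_rpow_one_fourth_mul_le {n : ℕ} (hn : 1 ≤ n) :
    (⌊(n : ℝ) ^ ((1 : ℝ) / 4)⌋₊ : ℝ) * n ≤ (n : ℝ) ^ ((7 : ℝ) / 4) := by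
  have hn' : (1 : ℝ) ≤ n := by exact_mod_cast hn
  calc (⌊(n : ℝ) ^ ((1 : ℝ) / 4)⌋₊ : ℝ) * n
        ≤ (n : ℝ) ^ ((1 : ℝ) / 4) * (n : ℝ) ^ (1 : ℝ) := by
        rw [Real.rpow_one]
        gcongr
        exact Nat.floor_le (by positivity)
    _ = (n : ℝ) ^ ((5 : ℝ) / 4) := by
        rw [← Real.rpow_add (by positivity)]
        norm_num
    _ ≤ (n : ℝ) ^ ((7 : ℝ) / 4) := Real.rpow_le_rpow_of_exponent_le hn' (by norm_num)

/-- any "staircase" region `Q = {(i,j) : a(i) ≤ j ≤ b(i)}` with `a, b`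
nondecreasing can be tiled by pairwise-disjoint `s × s` combinatorial rectangles
(`s = ⌊n^{1/4}⌋`) contained in `Q`, leaving at most `C·n^{7/4}` uncovered pairs. -/
theorem staircase_tiling :
    ∃ C : ℝ, 0 < C ∧
    ∀ (n : ℕ), 1 ≤ n →
    ∀ (a b : Fin n → Fin n), Monotone a → Monotone b →
    ∀ (Q : Finset (Fin n × Fin n)),
      Q = Finset.univ.filter (fun p => a p.1 ≤ p.2 ∧ p.2 ≤ b p.1) →
      ∃ (L : ℕ) (I J : Fin L → Finset (Fin n)),
        (∀ ℓ, (I ℓ).card = ⌊(n : ℝ) ^ ((1 : ℝ) / 4)⌋₊ ∧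
              (J ℓ).card = ⌊(n : ℝ) ^ ((1 : ℝ) / 4)⌋₊) ∧
        (∀ ℓ ℓ', ℓ ≠ ℓ' → Disjoint ((I ℓ) ×ˢ (J ℓ)) ((I ℓ') ×ˢ (J ℓ'))) ∧
        (∀ ℓ, (I ℓ) ×ˢ (J ℓ) ⊆ Q) ∧
        (((Q \ Finset.univ.biUnion fun ℓ => (I ℓ) ×ˢ (J ℓ)).card : ℝ) ≤
          C * (n : ℝ) ^ ((7 : ℝ) / 4)) := by
  refine ⟨4, by norm_num, fun n hn a b ha hb Q hQ => ?_⟩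
  set s := ⌊(n : ℝ) ^ ((1 : ℝ) / 4)⌋₊
  have hs : 0 < s := Nat.floor_pos.mpr (Real.one_le_rpow (by exact_mod_cast hn) (by norm_num))
  change Q = staircase a b at hQ
  subst hQ
  set P := gridCells s (staircase a b)
  let e : Fin P.card → ℕ × ℕ := fun l => P.equivFin.symm l
  refine ⟨P.card, fun l => block n s (e l).1, fun l => block n s (e l).2,
    fun l => card_block_of_mem_gridCells (P.equivFin.symm l).2,
    fun l l' hll' => disjoint_cell fun h => hll' (P.equivFin.symm.injective (Subtype.ext h)),
    fun l => cell_subset_of_mem_gridCells (P.equivFin.symm l).2, ?_⟩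
  rw [show univ.biUnion (fun l => block n s (e l).1 ×ˢ block n s (e l).2) = gridCover s _ from
    P.biUnion_univ_equivFin_symm (cell n s)]
  calc ((staircase a b \ gridCover s (staircase a b)).card : ℝ) ≤ 4 * ((s : ℝ) * n) := by
        exact_mod_cast (card_staircase_sdiff_gridCover_le ha hb hs).trans_eq (by ring)
    _ ≤ 4 * (n : ℝ) ^ ((7 : ℝ) / 4) := by
        gcongr
        exact natFloor_rpow_one_fourth_mul_le hn
end

section
/- Let n, s ≥ 1 be integers, let V be a finite set, let u, v : [n] → V, let c > 0, and let C ∈ ℝ^{n×n} have positive entries with C_{ij} ≥ c whenever u(i) ≠ v(j). Let λ be a probability distribution on [n]×[n]×{−1,1}, and let (i₁,j₁,σ₁),…,(i_s,j_s,σ_s) be i.i.d. samples from λ. For w ∈ V and k ∈ [s], set Z_w^k = (1{u(i_k) = w} − 1{v(j_k) = w})·σ_k/C_{i_k j_k}. Then E[ Σ_{w∈V} | (1/s)·Σ_{k=1}^{s} Z_w^k − E[Z_w^1] | ] ≤ 2·√n/(c·√s). -/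
open Finset

/-!
For each `w`, Jensen's inequality bounds `E|Z̄_w − E Z_w|` by the standard deviation of the
empirical mean, which by independence of the samples is `√(Var Z_w / s) ≤ √(E Z_w²) / √s`.
Pointwise `∑_w Z_w² ≤ 2/c²`: `Z_w ≠ 0` forces exactly one of `u(i) = w`, `v(j) = w`, hence
`u(i) ≠ v(j)` and `C_{ij} ≥ c`. Moreover `Z_w ≡ 0` unless `w ∈ u[n] ∪ v[n]`, a set of at most
`2n` points, so Cauchy–Schwarz gives `∑_w √(E Z_w²) ≤ √(2n · 2/c²) = 2√n/c`.
-/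

namespace Real

variable {ι : Type*}

theorem sum_mul_abs_le_sqrt_sum_mul_sq (t : Finset ι) {p : ι → ℝ} (hp : ∀ i, 0 ≤ p i)
    (hp1 : ∑ i ∈ t, p i = 1) (f : ι → ℝ) :
    ∑ i ∈ t, p i * |f i| ≤ √(∑ i ∈ t, p i * f i ^ 2) := by
  have h := sum_sqrt_mul_sqrt_le t hp (fun i => mul_nonneg (hp i) (sq_nonneg (f i)))
  rw [hp1, sqrt_one, one_mul] at h
  refine le_of_eq_of_le (sum_congr rfl fun i _ => ?_) h
  rw [sqrt_mul (hp i), sqrt_sq_eq_abs, ← mul_assoc, mul_self_sqrt (hp i)]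

theorem sum_sqrt_le_sqrt_card_mul_sum [Fintype ι] (t : Finset ι) {a : ι → ℝ}
    (ha : ∀ i, 0 ≤ a i) (ht : ∀ i ∉ t, a i = 0) :
    ∑ i, √(a i) ≤ √(#t * ∑ i, a i) := by
  have h := sum_sqrt_mul_sqrt_le t (fun _ => zero_le_one) ha
  simp only [sqrt_one, one_mul, sum_const, nsmul_one] at h
  rwa [sum_subset (subset_univ t) fun i _ hi => by rw [ht i hi, sqrt_zero],
    sum_subset (subset_univ t) fun i _ hi => ht i hi, ← sqrt_mul (Nat.cast_nonneg _)] at h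

end Real

theorem sum_mul_sub_sq_le_sum_mul_sq {ι : Type*} (t : Finset ι) {p : ι → ℝ}
    (hp1 : ∑ i ∈ t, p i = 1) (f : ι → ℝ) :
    ∑ i ∈ t, p i * (f i - ∑ j ∈ t, p j * f j) ^ 2 ≤ ∑ i ∈ t, p i * f i ^ 2 := by
  set μ := ∑ j ∈ t, p j * f j
  have hvar : ∑ i ∈ t, p i * (f i - μ) ^ 2 = ∑ i ∈ t, p i * f i ^ 2 - μ ^ 2 := by
    have hexp : ∀ i, p i * (f i - μ) ^ 2 = p i * f i ^ 2 - 2 * μ * (p i * f i) + μ ^ 2 * p i :=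
      fun i => by ring
    simp only [hexp, sum_add_distrib, sum_sub_distrib, ← mul_sum, hp1]
    ring
  linarith [hvar, sq_nonneg μ]

section IIDSample

variable {α : Type*} [Fintype α] {s : ℕ}

theorem sum_prod_mul_prod_eq_prod_sum (lam : α → ℝ) (h : Fin s → α → ℝ) :
    ∑ ω : Fin s → α, (∏ k, lam (ω k)) * ∏ k, h k (ω k) = ∏ k, ∑ a, lam a * h k a := by
  simp_rw [← prod_mul_distrib]
  exact (Fintype.prod_sum fun k a => lam a * h k a).symm

variable {lam : α → ℝ}

theorem sum_prod_eq_one (hsum : ∑ a, lam a = 1) :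
    ∑ ω : Fin s → α, ∏ k, lam (ω k) = 1 := by
  simpa [hsum] using sum_prod_mul_prod_eq_prod_sum (s := s) lam fun _ _ => 1

theorem sum_prod_mul_apply (hsum : ∑ a, lam a = 1) (f : α → ℝ) (k : Fin s) :
    ∑ ω : Fin s → α, (∏ m, lam (ω m)) * f (ω k) = ∑ a, lam a * f a := by
  have h := sum_prod_mul_prod_eq_prod_sum lam fun m a => if m = k then f a else 1
  have hfactor : ∀ m, ∑ a, lam a * (if m = k then f a else 1) =
      if m = k then ∑ a, lam a * f a else 1 := fun m => by
    split_ifs <;> simp [hsum]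
  simpa only [hfactor, Fintype.prod_ite_eq'] using h

theorem sum_prod_mul_apply_mul_apply (hsum : ∑ a, lam a = 1) (f g : α → ℝ) {k l : Fin s}
    (hkl : k ≠ l) :
    ∑ ω : Fin s → α, (∏ m, lam (ω m)) * (f (ω k) * g (ω l)) =
      (∑ a, lam a * f a) * ∑ a, lam a * g a := by
  have h := sum_prod_mul_prod_eq_prod_sum lam fun m a =>
    (if m = k then f a else 1) * (if m = l then g a else 1)
  have hfactor : ∀ m, ∑ a, lam a * ((if m = k then f a else 1) * (if m = l then g a else 1)) =
      (if m = k then ∑ a, lam a * f a else 1) * (if m = l then ∑ a, lam a * g a else 1) :=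
    fun m => by
      by_cases hk : m = k
      · subst hk
        simp [hkl]
      · by_cases hl : m = l
        · subst hl
          simp [hk]
        · simp [hk, hl, hsum]
  simpa only [hfactor, prod_mul_distrib, Fintype.prod_ite_eq'] using h

/-- Independence of the samples kills the cross terms. -/
theorem sum_prod_mul_sum_sq (hsum : ∑ a, lam a = 1) {g : α → ℝ} (hg : ∑ a, lam a * g a = 0) :
    ∑ ω : Fin s → α, (∏ m, lam (ω m)) * (∑ k, g (ω k)) ^ 2 = s * ∑ a, lam a * g a ^ 2 := by
  have hpair : ∀ k l : Fin s, ∑ ω : Fin s → α, (∏ m, lam (ω m)) * (g (ω k) * g (ω l)) =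
      if k = l then ∑ a, lam a * g a ^ 2 else 0 := fun k l => by
    split_ifs with hkl
    · subst hkl
      simpa only [← sq] using sum_prod_mul_apply hsum (fun a => g a ^ 2) k
    · rw [sum_prod_mul_apply_mul_apply hsum g g hkl, hg, zero_mul]
  calc ∑ ω : Fin s → α, (∏ m, lam (ω m)) * (∑ k, g (ω k)) ^ 2
      = ∑ k, ∑ l, ∑ ω : Fin s → α, (∏ m, lam (ω m)) * (g (ω k) * g (ω l)) := by
        simp_rw [sq, sum_mul_sum, mul_sum]
        rw [sum_comm]
        exact sum_congr rfl fun k _ => sum_comm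
    _ = s * ∑ a, lam a * g a ^ 2 := by simp [hpair]

theorem sum_prod_mul_abs_mean_sub_le (hs : 0 < s) (hlam : ∀ a, 0 ≤ lam a)
    (hsum : ∑ a, lam a = 1) (f : α → ℝ) :
    ∑ ω : Fin s → α, (∏ k, lam (ω k)) * |1 / (s : ℝ) * (∑ k, f (ω k)) - ∑ a, lam a * f a| ≤
      √(∑ a, lam a * f a ^ 2) / √s := by
  set μ := ∑ a, lam a * f a
  have hs' : (s : ℝ) ≠ 0 := by positivity
  have hcenter : ∀ ω : Fin s → α,
      1 / (s : ℝ) * (∑ k, f (ω k)) - μ = (∑ k, (f (ω k) - μ)) / s := fun ω => by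
    rw [sum_sub_distrib, sum_const, card_univ, Fintype.card_fin, nsmul_eq_mul]
    field_simp
  have hmean : ∑ a, lam a * (f a - μ) = 0 := by
    simp only [mul_sub, sum_sub_distrib, ← sum_mul, hsum, one_mul, μ, sub_self]
  calc ∑ ω : Fin s → α, (∏ k, lam (ω k)) * |1 / (s : ℝ) * (∑ k, f (ω k)) - μ|
      ≤ √(∑ ω : Fin s → α, (∏ k, lam (ω k)) * ((∑ k, (f (ω k) - μ)) / s) ^ 2) := by
        simp_rw [hcenter]
        exact Real.sum_mul_abs_le_sqrt_sum_mul_sq _ (fun ω => prod_nonneg fun k _ => hlam _)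
          (sum_prod_eq_one hsum) _
    _ = √((∑ a, lam a * (f a - μ) ^ 2) / s) := by
        simp_rw [div_pow, mul_div_assoc', ← sum_div, sum_prod_mul_sum_sq hsum hmean]
        congr 1
        field_simp
    _ ≤ √((∑ a, lam a * f a ^ 2) / s) := by
        gcongr √(?_ / _)
        exact sum_mul_sub_sq_le_sum_mul_sq univ hsum f
    _ = √(∑ a, lam a * f a ^ 2) / √s := Real.sqrt_div' _ (Nat.cast_nonneg s)

end IIDSample

theorem sum_sqrt_sum_mul_sq_le {ι V : Type*} [Fintype ι] [Fintype V] {lam : ι → ℝ}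
    (hlam : ∀ p, 0 ≤ lam p) (hsum : ∑ p, lam p = 1) {Z : V → ι → ℝ} {B : ℝ}
    (hB : ∀ p, ∑ w, Z w p ^ 2 ≤ B) (t : Finset V) (ht : ∀ w ∉ t, ∀ p, Z w p = 0) :
    ∑ w, √(∑ p, lam p * Z w p ^ 2) ≤ √(#t * B) := by
  have hmoment : ∑ w, ∑ p, lam p * Z w p ^ 2 ≤ B := calc
    ∑ w, ∑ p, lam p * Z w p ^ 2 = ∑ p, lam p * ∑ w, Z w p ^ 2 := by
      rw [sum_comm]
      simp_rw [mul_sum]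
    _ ≤ ∑ p, lam p * B := sum_le_sum fun p _ => mul_le_mul_of_nonneg_left (hB p) (hlam p)
    _ = B := by rw [← sum_mul, hsum, one_mul]
  calc ∑ w, √(∑ p, lam p * Z w p ^ 2)
      ≤ √(#t * ∑ w, ∑ p, lam p * Z w p ^ 2) :=
        Real.sum_sqrt_le_sqrt_card_mul_sum t
          (fun w => sum_nonneg fun p _ => mul_nonneg (hlam p) (sq_nonneg _))
          (fun w hw => by simp [ht w hw])
    _ ≤ √(#t * B) := by gcongr

theorem sum_sq_indicator_sub_mul_div_le {V : Type*} [Fintype V] [DecidableEq V] {x y : V}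
    {c t d : ℝ} (hc : 0 < c) (ht : t ^ 2 = 1) (hd : x ≠ y → c ≤ d) :
    ∑ w, (((if x = w then 1 else 0) - (if y = w then 1 else 0)) * t / d) ^ 2 ≤ 2 / c ^ 2 := by
  have hone : x ≠ y → (t / d) ^ 2 ≤ 1 / c ^ 2 := fun hxy => by
    rw [div_pow, ht]
    exact one_div_le_one_div_of_le (by positivity) (pow_le_pow_left₀ hc.le (hd hxy) 2)
  have hterm : ∀ w, (((if x = w then 1 else 0) - (if y = w then 1 else 0)) * t / d) ^ 2 ≤
      ((if x = w then 1 else 0) + (if y = w then 1 else 0)) / c ^ 2 := fun w => by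
    by_cases hx : x = w <;> by_cases hy : y = w
    · rw [if_pos hx, if_pos hy, sub_self, zero_mul, zero_div, sq, mul_zero]
      positivity
    · simpa [hx, hy] using hone (hx.trans_ne (Ne.symm hy))
    · simpa [hx, hy, neg_div] using hone (Ne.symm (hy.trans_ne (Ne.symm hx)))
    · simp [hx, hy]
  calc _ ≤ ∑ w, ((if x = w then 1 else 0) + (if y = w then 1 else 0)) / c ^ 2 :=
        sum_le_sum fun w _ => hterm w
    _ = 2 / c ^ 2 := by
        rw [← sum_div, sum_add_distrib, Fintype.sum_ite_eq, Fintype.sum_ite_eq, one_add_one_eq_two]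

theorem sg_sq (σ : Bool) : sg σ ^ 2 = 1 := by
  cases σ <;> simp [sg]

open Classical in
theorem empirical_deviation_bound_general {n s : ℕ} (hs : 1 ≤ s)
    (V : Type) [Fintype V] [DecidableEq V] (u v : Fin n → V)
    (c : ℝ) (hc : 0 < c)
    (C : Fin n → Fin n → ℝ)
    (hC : ∀ i j, u i ≠ v j → c ≤ C i j)
    (lam : Fin n × Fin n × Bool → ℝ) (hlam : ∀ p, 0 ≤ lam p)
    (hsum : ∑ p, lam p = 1)
    (Z : V → Fin n × Fin n × Bool → ℝ)
    (hZ : ∀ w p, Z w p =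
      ((if u p.1 = w then (1 : ℝ) else 0) - (if v p.2.1 = w then 1 else 0)) *
        sg p.2.2 / C p.1 p.2.1) :
    (∑ ω : Fin s → Fin n × Fin n × Bool, (∏ k, lam (ω k)) *
        (∑ w, |(1 / (s : ℝ)) * (∑ k, Z w (ω k)) - ∑ p, lam p * Z w p|)) ≤
      2 * Real.sqrt n / (c * Real.sqrt s) := by
  set t := univ.image u ∪ univ.image v
  have hcard : #t ≤ 2 * n := (card_union_le _ _).trans <| by
    simpa [two_mul] using add_le_add (card_image_le (s := univ) (f := u))
      (card_image_le (s := univ) (f := v))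
  have hsupport : ∀ w ∉ t, ∀ p, Z w p = 0 := fun w hw p => by
    simp only [t, mem_union, mem_image, mem_univ, true_and, not_or, not_exists] at hw
    simp [hZ, hw.1, hw.2]
  have hZsq : ∀ p, ∑ w, Z w p ^ 2 ≤ 2 / c ^ 2 := fun p => by
    simpa only [hZ] using sum_sq_indicator_sub_mul_div_le hc (sg_sq p.2.2) (hC p.1 p.2.1)
  have hroots : ∑ w, √(∑ p, lam p * Z w p ^ 2) ≤ 2 * √n / c := calc
    _ ≤ √(#t * (2 / c ^ 2)) := sum_sqrt_sum_mul_sq_le hlam hsum hZsq t hsupport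
    _ ≤ √(2 * n * (2 / c ^ 2)) := by gcongr; exact_mod_cast hcard
    _ = 2 * √n / c := by
      rw [show (2 * n * (2 / c ^ 2) : ℝ) = (2 * √n / c) ^ 2 by
        rw [div_pow, mul_pow, Real.sq_sqrt (Nat.cast_nonneg n)]; ring]
      exact Real.sqrt_sq (by positivity)
  calc _ = ∑ w, ∑ ω : Fin s → Fin n × Fin n × Bool,
        (∏ k, lam (ω k)) * |1 / (s : ℝ) * (∑ k, Z w (ω k)) - ∑ p, lam p * Z w p| := by
        simp_rw [mul_sum]
        exact sum_comm
    _ ≤ ∑ w, √(∑ p, lam p * Z w p ^ 2) / √s :=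
        sum_le_sum fun w _ => sum_prod_mul_abs_mean_sub_le hs hlam hsum (Z w)
    _ ≤ 2 * √n / c / √s := by
        rw [← sum_div]
        gcongr
    _ = 2 * √n / (c * √s) := div_div _ _ _

open Classical in
/-- for `s` i.i.d. samples from `λ` on `[n]×[n]×{−1,1}`, the expected total
ℓ₁ deviation of the empirical means of the variables `Z_w` from their expectations is at
most `2√n/(c·√s)`.  (Expectation written as an explicit finite sum over sample
sequences, weighted by the product of their `λ`-probabilities.) -/
theorem empirical_deviation_bound {n s : ℕ} (hn : 1 ≤ n) (hs : 1 ≤ s)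
    (V : Type) [Fintype V] [DecidableEq V] (u v : Fin n → V)
    (c : ℝ) (hc : 0 < c)
    (C : Fin n → Fin n → ℝ) (hCpos : ∀ i j, 0 < C i j)
    (hC : ∀ i j, u i ≠ v j → c ≤ C i j)
    (lam : Fin n × Fin n × Bool → ℝ) (hlam : ∀ p, 0 ≤ lam p)
    (hsum : ∑ p, lam p = 1)
    (Z : V → Fin n × Fin n × Bool → ℝ)
    (hZ : ∀ w p, Z w p =
      ((if u p.1 = w then (1 : ℝ) else 0) - (if v p.2.1 = w then 1 else 0)) *
        sg p.2.2 / C p.1 p.2.1) :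
    (∑ ω : Fin s → Fin n × Fin n × Bool, (∏ k, lam (ω k)) *
        (∑ w, |(1 / (s : ℝ)) * (∑ k, Z w (ω k)) - ∑ p, lam p * Z w p|)) ≤
      2 * Real.sqrt n / (c * Real.sqrt s) :=
  empirical_deviation_bound_general hs V u v c hc C hC lam hlam hsum Z hZ
end
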